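/- arXiv:2109.04860 — 8 statements merged into one kernel-verified Lean document; each statement's English description precedes it below -/
import Mathlib

section
/- Let 0 < α < β. There exist γ ∈ (0,1) (sufficiently close to 1, depending only on α, β and the doubling constant c₃ of μ) and c > 0 (depending only on α, β, γ, c₃) such that for every closed set E ⊂ ∂Ω the following holds: if E* denotes the set of points of global γ-density of E, i.e. E* := {x ∈ ∂Ω : μ(E ∩ Δ(x,r)) ≥ γ μ(Δ(x,r)) for all r > 0}, then for every Y ∈ 𝓡_β(E*) := ⋃_{x∈E*} Γ^β(x) one has μ( E ∩ B(Y, (1+α) δ(Y)) ∩ ∂Ω ) ≥ c · μ(Δ(ŷ(Y), δ(Y))). -/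
/-!
Let `Y ∈ Γ^β(x)` with `x ∈ E*`, `δ = δ(Y)` and `y = ŷ(Y)`. Then `|x - y| < (2 + β) δ`, so the
surface ball `S = Δ(y, αδ)`, which lies in `B(Y, (1+α)δ)`, sits inside `A = Δ(x, (2+β+α)δ)`,
and `A` and `Δ(y, δ)` both lie in `Δ(y, 2^k αδ)` for a `k` depending only on `α, β`. Doubling
gives `μ A, μ Δ(y, δ) ≤ c₃^k μ S`. Since `x` is a point of `γ`-density with `γ = 1 - ε`,
`μ(A \ E) ≤ ε μ A ≤ ε c₃^k μ S ≤ μ S / 2` once `ε c₃^k ≤ 1/2`, so `E` fills at least half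
of `S`: `μ(E ∩ S) ≥ μ S / 2 ≥ ε μ Δ(y, δ)`.
-/

open Metric MeasureTheory Set
open scoped ENNReal

noncomputable section

/-- Distance to the boundary of `Ω`. -/
def bdist {n : ℕ} (Ω : Set (EuclideanSpace ℝ (Fin (n + 1))))
    (X : EuclideanSpace ℝ (Fin (n + 1))) : ℝ :=
  Metric.infDist X (frontier Ω)

/-- The cone `Γ^α(x)` with vertex `x` and aperture `α`. -/
def cone {n : ℕ} (Ω : Set (EuclideanSpace ℝ (Fin (n + 1)))) (α : ℝ)
    (x : EuclideanSpace ℝ (Fin (n + 1))) : Set (EuclideanSpace ℝ (Fin (n + 1))) :=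
  {Y | Y ∈ Ω ∧ dist Y x < (1 + α) * bdist Ω Y}

lemma ENNReal.exists_pos_lt_one_mul_le_half {C : ℝ≥0∞} (hC : C ≠ ∞) :
    ∃ ε : ℝ≥0∞, 0 < ε ∧ ε < 1 ∧ ε * C ≤ 2⁻¹ := by
  obtain ⟨ε, hε, hεC⟩ := ENNReal.exists_pos_mul_lt (a := C + 1) (by finiteness)
    (ENNReal.inv_ne_zero.mpr (ENNReal.ofNat_ne_top (n := 2)))
  refine ⟨ε, hε, ?_, (mul_le_mul_right le_self_add ε).trans hεC.le⟩
  calc ε = ε * 1 := (mul_one ε).symm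
    _ ≤ ε * (C + 1) := mul_le_mul_right le_add_self ε
    _ < 2⁻¹ := hεC
    _ < 1 := ENNReal.inv_lt_one.mpr ENNReal.one_lt_two

lemma bdist_pos {n : ℕ} {Ω : Set (EuclideanSpace ℝ (Fin (n + 1)))} (hΩ : IsOpen Ω)
    (hF : (frontier Ω).Nonempty) {Y : EuclideanSpace ℝ (Fin (n + 1))} (hY : Y ∈ Ω) :
    0 < bdist Ω Y :=
  (isClosed_frontier.notMem_iff_infDist_pos hF).mp fun h => (hΩ.frontier_eq ▸ h).2 hY

section Density

variable {X : Type*} [MeasurableSpace X] {μ : Measure X}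

lemma measure_sdiff_le_mul_of_one_sub_mul_le {A E : Set X} {ε : ℝ≥0∞} (hE : MeasurableSet E)
    (hA : μ A ≠ ∞) (hε : ε ≤ 1) (h : (1 - ε) * μ A ≤ μ (E ∩ A)) : μ (A \ E) ≤ ε * μ A := by
  have hAE : μ (A ∩ E) ≠ ∞ := measure_ne_top_of_subset inter_subset_left hA
  refine ENNReal.le_of_add_le_add_left hAE ?_
  calc μ (A ∩ E) + μ (A \ E) = (1 - ε) * μ A + ε * μ A := by
        rw [measure_inter_add_sdiff A hE, ← add_mul, tsub_add_cancel_of_le hε, one_mul]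
    _ ≤ μ (A ∩ E) + ε * μ A := by rw [inter_comm]; gcongr

lemma half_measure_le_measure_inter_of_measure_sdiff_le {S A E : Set X} (hSA : S ⊆ A)
    (hS : μ S ≠ ∞) (h : μ (A \ E) ≤ μ S / 2) : μ S / 2 ≤ μ (E ∩ S) := by
  refine ENNReal.le_of_add_le_add_right (ENNReal.div_ne_top hS two_ne_zero) ?_
  calc μ S / 2 + μ S / 2 = μ S := ENNReal.add_halves _
    _ ≤ μ (S ∩ E) + μ (S \ E) := measure_le_inter_add_sdiff μ S E
    _ ≤ μ (E ∩ S) + μ S / 2 := by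
        rw [inter_comm]
        exact add_le_add_right ((measure_mono (sdiff_subset_sdiff_left hSA)).trans h) _

end Density

section Doubling

variable {X : Type*} [PseudoMetricSpace X] [MeasurableSpace X] {μ : Measure X}

lemma measure_ball_two_pow_mul_inter_le {F : Set X} {c₃ : ℝ≥0∞} {p : X}
    (h : ∀ r : ℝ, 0 < r → μ (ball p (2 * r) ∩ F) ≤ c₃ * μ (ball p r ∩ F)) (k : ℕ) {r : ℝ}
    (hr : 0 < r) : μ (ball p (2 ^ k * r) ∩ F) ≤ c₃ ^ k * μ (ball p r ∩ F) := by
  induction k with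
  | zero => simp
  | succ k ih =>
    calc μ (ball p (2 ^ (k + 1) * r) ∩ F) = μ (ball p (2 * (2 ^ k * r)) ∩ F) := by
          rw [pow_succ', mul_assoc]
      _ ≤ c₃ * μ (ball p (2 ^ k * r) ∩ F) := h _ (by positivity)
      _ ≤ c₃ * (c₃ ^ k * μ (ball p r ∩ F)) := mul_le_mul_right ih c₃
      _ = c₃ ^ (k + 1) * μ (ball p r ∩ F) := by rw [pow_succ', mul_assoc]

lemma mul_measure_ball_inter_le_of_density {F E : Set X} {c₃ ε : ℝ≥0∞} {α β δ : ℝ} {k : ℕ}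
    {x y Y : X} (hE : MeasurableSet E)
    (hμ : ∀ z ∈ F, ∀ r : ℝ, 0 < r →
      μ (ball z r ∩ F) < ∞ ∧ μ (ball z (2 * r) ∩ F) ≤ c₃ * μ (ball z r ∩ F))
    (hα : 0 < α) (hk : max 1 (4 + 2 * β + α) ≤ 2 ^ k * α) (hε : ε ≤ 1)
    (hεc : ε * c₃ ^ k ≤ 2⁻¹) (hx : x ∈ F)
    (hdens : ∀ r : ℝ, 0 < r → (1 - ε) * μ (ball x r ∩ F) ≤ μ (E ∩ (ball x r ∩ F)))
    (hy : y ∈ F) (hδ : 0 < δ) (hYy : dist Y y = δ) (hYx : dist Y x < (1 + β) * δ) :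
    ε * μ (ball y δ ∩ F) ≤ μ (E ∩ ball Y ((1 + α) * δ) ∩ F) := by
  obtain ⟨hk₁, hk₂⟩ := max_le_iff.mp hk
  have hxy : dist x y < (2 + β) * δ := by
    linarith [dist_triangle x Y y, dist_comm x Y]
  have hαδ : 0 < α * δ := mul_pos hα hδ
  have hR : 0 < (2 + β + α) * δ := by linarith [dist_nonneg (x := x) (y := y)]
  set S := ball y (α * δ) ∩ F
  set A := ball x ((2 + β + α) * δ) ∩ F
  have hSA : S ⊆ A := inter_subset_inter_left _ <| ball_subset_ball' <| by
    rw [dist_comm]; linarith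
  have hSB : S ⊆ ball Y ((1 + α) * δ) := fun z hz => ball_subset_ball' (by
    rw [dist_comm, hYy]; linarith) hz.1
  have hS_le : ∀ T ⊆ ball y (2 ^ k * (α * δ)) ∩ F, ε * μ T ≤ μ S / 2 := fun T hT =>
    calc ε * μ T ≤ ε * (c₃ ^ k * μ S) := by
          gcongr
          exact (measure_mono hT).trans
            (measure_ball_two_pow_mul_inter_le (fun r hr => (hμ y hy r hr).2) k hαδ)
      _ = ε * c₃ ^ k * μ S := (mul_assoc _ _ _).symm
      _ ≤ 2⁻¹ * μ S := by gcongr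
      _ = μ S / 2 := (ENNReal.div_eq_inv_mul).symm
  have hA_sub : A ⊆ ball y (2 ^ k * (α * δ)) ∩ F := inter_subset_inter_left _ <|
    ball_subset_ball' <| by nlinarith
  have hδ_sub : ball y δ ∩ F ⊆ ball y (2 ^ k * (α * δ)) ∩ F := inter_subset_inter_left _ <|
    ball_subset_ball <| by nlinarith
  have hAE : μ (A \ E) ≤ μ S / 2 :=
    (measure_sdiff_le_mul_of_one_sub_mul_le hE (hμ x hx _ hR).1.ne hε (hdens _ hR)).trans
      (hS_le A hA_sub)
  calc ε * μ (ball y δ ∩ F) ≤ μ S / 2 := hS_le _ hδ_sub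
    _ ≤ μ (E ∩ S) :=
        half_measure_le_measure_inter_of_measure_sdiff_le hSA (hμ y hy _ hαδ).1.ne hAE
    _ ≤ μ (E ∩ ball Y ((1 + α) * δ) ∩ F) :=
        measure_mono fun z ⟨hzE, hzS⟩ => ⟨⟨hzE, hSB hzS⟩, hzS.2⟩

end Doubling

theorem statement1_general (α β : ℝ) (hα : 0 < α)
    (c₃ : ℝ≥0∞) (hc₃' : c₃ < ∞) :
    ∃ γ : ℝ≥0∞, 0 < γ ∧ γ < 1 ∧ ∃ c : ℝ≥0∞, 0 < c ∧
      ∀ (n : ℕ) (Ω : Set (EuclideanSpace ℝ (Fin (n + 1)))),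
        IsOpen Ω → Ω.Nonempty → (frontier Ω).Nonempty →
        ∀ μ : Measure (EuclideanSpace ℝ (Fin (n + 1))),
          -- μ is a doubling measure on ∂Ω with constant c₃
          (∀ x ∈ frontier Ω, ∀ r : ℝ, 0 < r →
            0 < μ (ball x r ∩ frontier Ω) ∧ μ (ball x r ∩ frontier Ω) < ∞ ∧
              μ (ball x (2 * r) ∩ frontier Ω) ≤ c₃ * μ (ball x r ∩ frontier Ω)) →
          -- ŷ is a measurable nearest boundary point map
          ∀ yhat : EuclideanSpace ℝ (Fin (n + 1)) → EuclideanSpace ℝ (Fin (n + 1)),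
            Measurable yhat →
            (∀ Y ∈ Ω, yhat Y ∈ frontier Ω ∧ dist Y (yhat Y) = bdist Ω Y) →
            ∀ E : Set (EuclideanSpace ℝ (Fin (n + 1))),
              IsClosed E → E ⊆ frontier Ω →
              -- for every Y in 𝓡_β(E*), where E* is the set of points of global
              -- γ-density with respect to E
              ∀ Y ∈ ⋃ x ∈ {x ∈ frontier Ω | ∀ r : ℝ, 0 < r →
                      γ * μ (ball x r ∩ frontier Ω) ≤ μ (E ∩ (ball x r ∩ frontier Ω))},
                    cone Ω β x,
                c * μ (ball (yhat Y) (bdist Ω Y) ∩ frontier Ω) ≤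
                  μ (E ∩ ball Y ((1 + α) * bdist Ω Y) ∩ frontier Ω) := by
  obtain ⟨k, hk⟩ : ∃ k : ℕ, max 1 (4 + 2 * β + α) ≤ 2 ^ k * α := by
    obtain ⟨k, hk⟩ := pow_unbounded_of_one_lt (max 1 (4 + 2 * β + α) / α) one_lt_two
    exact ⟨k, ((div_lt_iff₀ hα).mp hk).le⟩
  obtain ⟨ε, hε0, hε1, hεc⟩ :=
    ENNReal.exists_pos_lt_one_mul_le_half (ENNReal.pow_ne_top hc₃'.ne (n := k))
  refine ⟨1 - ε, tsub_pos_of_lt hε1,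
    ENNReal.sub_lt_self ENNReal.one_ne_top one_ne_zero hε0.ne', ε, hε0, ?_⟩
  intro n Ω hΩ _ hF μ hμ yhat _ hyhat E hE _ Y hY
  simp only [mem_iUnion, mem_ofPred_eq, cone] at hY
  obtain ⟨x, ⟨hxF, hxdens⟩, hYΩ, hYx⟩ := hY
  obtain ⟨hyF, hYy⟩ := hyhat Y hYΩ
  exact mul_measure_ball_inter_le_of_density hE.measurableSet
    (fun z hz r hr => (hμ z hz r hr).2) hα hk hε1.le hεc hxF hxdens hyF (bdist_pos hΩ hF hYΩ)
    hYy hYx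

/-- for `γ` close enough to 1 (depending only on `α < β` and the doubling
constant `c₃`), if `E*` is the set of points of global `γ`-density of a closed set
`E ⊆ ∂Ω`, then for every `Y` in the sawtooth region `𝓡_β(E*)` the set `E` has
substantial measure in `B(Y, (1+α)δ(Y)) ∩ ∂Ω`:
`μ(E ∩ B(Y,(1+α)δ(Y)) ∩ ∂Ω) ≥ c μ(Δ(ŷ(Y), δ(Y)))`. -/
theorem statement1 (α β : ℝ) (hα : 0 < α) (hαβ : α < β)
    (c₃ : ℝ≥0∞) (hc₃ : 1 < c₃) (hc₃' : c₃ < ∞) :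
    ∃ γ : ℝ≥0∞, 0 < γ ∧ γ < 1 ∧ ∃ c : ℝ≥0∞, 0 < c ∧
      ∀ (n : ℕ) (Ω : Set (EuclideanSpace ℝ (Fin (n + 1)))),
        IsOpen Ω → Ω.Nonempty → (frontier Ω).Nonempty →
        ∀ μ : Measure (EuclideanSpace ℝ (Fin (n + 1))),
          -- μ is a doubling measure on ∂Ω with constant c₃
          (∀ x ∈ frontier Ω, ∀ r : ℝ, 0 < r →
            0 < μ (ball x r ∩ frontier Ω) ∧ μ (ball x r ∩ frontier Ω) < ∞ ∧
              μ (ball x (2 * r) ∩ frontier Ω) ≤ c₃ * μ (ball x r ∩ frontier Ω)) →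
          -- ŷ is a measurable nearest boundary point map
          ∀ yhat : EuclideanSpace ℝ (Fin (n + 1)) → EuclideanSpace ℝ (Fin (n + 1)),
            Measurable yhat →
            (∀ Y ∈ Ω, yhat Y ∈ frontier Ω ∧ dist Y (yhat Y) = bdist Ω Y) →
            ∀ E : Set (EuclideanSpace ℝ (Fin (n + 1))),
              IsClosed E → E ⊆ frontier Ω →
              -- for every Y in 𝓡_β(E*), where E* is the set of points of global
              -- γ-density with respect to E
              ∀ Y ∈ ⋃ x ∈ {x ∈ frontier Ω | ∀ r : ℝ, 0 < r →
                      γ * μ (ball x r ∩ frontier Ω) ≤ μ (E ∩ (ball x r ∩ frontier Ω))},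
                    cone Ω β x,
                c * μ (ball (yhat Y) (bdist Ω Y) ∩ frontier Ω) ≤
                  μ (E ∩ ball Y ((1 + α) * bdist Ω Y) ∩ frontier Ω) :=
  statement1_general α β hα c₃ hc₃'
end
end

section
/- Let 0 < p < ∞ and 0 < α ≤ β < ∞. There exists a constant C, depending only on p, α, β and the doubling constant c₃ of μ, such that for every continuous function F : Ω → ℝ one has ‖𝒩_β F‖_{L^p(∂Ω, μ)} ≤ C ‖𝒩_α F‖_{L^p(∂Ω, μ)}, where 𝒩_α F(x) := sup_{Y ∈ Γ^α(x)} |F(Y)| is the non-tangential maximal function. -/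
open Metric MeasureTheory Set
open scoped ENNReal

noncomputable section

/-- The non-tangential maximal function `𝒩_α F(x) = sup_{Y ∈ Γ^α(x)} |F(Y)|`. -/
def ntMax {n : ℕ} (Ω : Set (EuclideanSpace ℝ (Fin (n + 1)))) (α : ℝ)
    (F : EuclideanSpace ℝ (Fin (n + 1)) → ℝ) (x : EuclideanSpace ℝ (Fin (n + 1))) :
    ℝ≥0∞ :=
  ⨆ Y ∈ cone Ω α x, ENNReal.ofReal |F Y|

/-!
If `Y` lies in the `β`-cone at `x` and `y ∈ ∂Ω` is nearest to `Y`, then `Y` lies in the `α`-cone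
at every boundary point of `B(y, α δ(Y))`, and `|x - y| < (2 + β) δ(Y)`. So every point of
`{𝒩_β F > t} ∩ ∂Ω` lies within `(2 + β) d` of the centre of a boundary ball `B(y, α d)` contained
in `{𝒩_α F > t}`. A Vitali covering and `m` doublings, `2^m α ≥ 5 (2 + β)`, give the distribution
inequality `μ{𝒩_β F > t} ≤ c₃^m μ{𝒩_α F > t}`, and the layer-cake formula turns it into the
`L^p` bound with `C = c₃^(m/p)`.
-/

theorem volume_restrict_Ioi_setOf_ofReal_lt (c : ℝ≥0∞) :
    volume.restrict (Ioi (0 : ℝ)) {t | ENNReal.ofReal t < c} = c := by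
  rw [Measure.restrict_apply (measurableSet_lt ENNReal.measurable_ofReal measurable_const)]
  rcases eq_or_ne c ∞ with rfl | hc
  · simp
  · have : {t : ℝ | ENNReal.ofReal t < c} ∩ Ioi 0 = Ioo 0 c.toReal := by
      ext t
      simp only [mem_inter_iff, mem_ofPred_eq, mem_Ioi, mem_Ioo]
      constructor
      · rintro ⟨h, h0⟩
        exact ⟨h0, (ENNReal.ofReal_lt_iff_lt_toReal h0.le hc).1 h⟩
      · rintro ⟨h0, h⟩
        exact ⟨(ENNReal.ofReal_lt_iff_lt_toReal h0.le hc).2 h, h0⟩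
    rw [this, Real.volume_Ioo, sub_zero, ENNReal.ofReal_toReal hc]

theorem lintegral_eq_lintegral_meas_ofReal_lt {α : Type*} [MeasurableSpace α] (μ : Measure α)
    [SFinite μ] {f : α → ℝ≥0∞} (hf : Measurable f) :
    ∫⁻ x, f x ∂μ = ∫⁻ t in Ioi 0, μ {x | ENNReal.ofReal t < f x} := by
  have hmeas : MeasurableSet {p : α × ℝ | ENNReal.ofReal p.2 < f p.1} :=
    measurableSet_lt measurable_snd.ennreal_ofReal (hf.comp measurable_fst)
  calc ∫⁻ x, f x ∂μ
      = ∫⁻ x, (∫⁻ t in Ioi 0, {t : ℝ | ENNReal.ofReal t < f x}.indicator 1 t) ∂μ := by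
        refine lintegral_congr fun x => ?_
        rw [lintegral_indicator_one (measurableSet_lt ENNReal.measurable_ofReal
          measurable_const), volume_restrict_Ioi_setOf_ofReal_lt]
    _ = ∫⁻ t in Ioi 0, ∫⁻ x, {x | ENNReal.ofReal t < f x}.indicator 1 x ∂μ :=
        lintegral_lintegral_swap (by exact (measurable_one.indicator hmeas).aemeasurable)
    _ = ∫⁻ t in Ioi 0, μ {x | ENNReal.ofReal t < f x} := by
        refine lintegral_congr fun t => ?_
        rw [lintegral_indicator_one (measurableSet_lt measurable_const hf)]

theorem lintegral_rpow_le_mul_of_meas_lt_le {α : Type*} [MeasurableSpace α] (μ : Measure α)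
    [SFinite μ] {f g : α → ℝ≥0∞} (hf : Measurable f) (hg : Measurable g) {p : ℝ} (hp : 0 < p)
    {K : ℝ≥0∞} (h : ∀ t, μ {x | t < g x} ≤ K * μ {x | t < f x}) :
    ∫⁻ x, g x ^ p ∂μ ≤ K * ∫⁻ x, f x ^ p ∂μ := by
  have hlevel : ∀ (u : α → ℝ≥0∞) (s : ℝ≥0∞), {x | s < u x ^ p} = {x | s ^ p⁻¹ < u x} :=
    fun u s => by simp only [ENNReal.rpow_inv_lt_iff hp]
  have hantitone : Antitone fun t : ℝ => μ {x | ENNReal.ofReal t < f x ^ p} :=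
    fun s t hst => measure_mono fun x hx => (ENNReal.ofReal_le_ofReal hst).trans_lt hx
  rw [lintegral_eq_lintegral_meas_ofReal_lt μ (hg.pow_const p),
    lintegral_eq_lintegral_meas_ofReal_lt μ (hf.pow_const p),
    ← lintegral_const_mul K hantitone.measurable]
  refine lintegral_mono fun t => ?_
  simpa only [hlevel] using h _

section Doubling

variable {X : Type*} [PseudoMetricSpace X] [MeasurableSpace X]

def DoublingOn (μ : Measure X) (S : Set X) (c : ℝ≥0∞) : Prop :=
  ∀ x ∈ S, ∀ r : ℝ, 0 < r → μ (ball x (2 * r) ∩ S) ≤ c * μ (ball x r ∩ S)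

variable {μ : Measure X} {S : Set X} {c : ℝ≥0∞}

theorem DoublingOn.measure_ball_le_pow_mul (h : DoublingOn μ S c) {x : X} (hx : x ∈ S)
    {r s : ℝ} (hs : 0 < s) {m : ℕ} (hr : r ≤ 2 ^ m * s) :
    μ (ball x r ∩ S) ≤ c ^ m * μ (ball x s ∩ S) := by
  refine (measure_mono (inter_subset_inter_left _ (ball_subset_ball hr))).trans ?_
  clear hr
  induction m with
  | zero => simp
  | succ k ih =>
    calc μ (ball x (2 ^ (k + 1) * s) ∩ S)
        = μ (ball x (2 * (2 ^ k * s)) ∩ S) := by rw [pow_succ, mul_comm _ (2 : ℝ), mul_assoc]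
      _ ≤ c * μ (ball x (2 ^ k * s) ∩ S) := h x hx _ (by positivity)
      _ ≤ c * (c ^ k * μ (ball x s ∩ S)) := by gcongr
      _ = c ^ (k + 1) * μ (ball x s ∩ S) := by rw [pow_succ', mul_assoc]

variable [OpensMeasurableSpace X] [TopologicalSpace.SeparableSpace X]

theorem DoublingOn.measure_le_pow_mul_of_subset_ball (h : DoublingOn μ S c)
    (hS : MeasurableSet S) {A E : Set X} {x₀ : X} {ρ : ℝ} (hAρ : A ⊆ ball x₀ ρ) (hAS : A ⊆ S)
    {α κ : ℝ} (hα : 0 < α) (hακ : α ≤ κ) {m : ℕ} (hm : 5 * κ ≤ 2 ^ m * α)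
    (hA : ∀ x ∈ A, ∃ y ∈ S, ∃ d > 0, dist x y < κ * d ∧ ball y (α * d) ∩ S ⊆ E) :
    μ A ≤ c ^ m * μ E := by
  choose! y hy d hd hdist hsub using hA
  have hκ : 0 < κ := hα.trans_le hακ
  -- A ball wider than `ball x₀ ρ` covers `A` on its own once tripled; otherwise radii are bounded.
  by_cases hbig : ∃ x ∈ A, ρ < κ * d x
  · obtain ⟨x, hx, hρ⟩ := hbig
    have hcover : A ⊆ ball (y x) (3 * κ * d x) ∩ S := by
      intro z hz
      refine ⟨?_, hAS hz⟩
      have hz₀ : dist z x₀ < ρ := hAρ hz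
      have hx₀ : dist x₀ x < ρ := by rw [dist_comm]; exact hAρ hx
      have := dist_triangle4 z x₀ x (y x)
      rw [mem_ball]
      linarith [hdist x hx]
    calc μ A ≤ μ (ball (y x) (3 * κ * d x) ∩ S) := measure_mono hcover
      _ ≤ c ^ m * μ (ball (y x) (α * d x) ∩ S) := by
        refine h.measure_ball_le_pow_mul (hy x hx) (by nlinarith [hd x hx]) ?_
        nlinarith [hd x hx]
      _ ≤ c ^ m * μ E := by gcongr; exact hsub x hx
  push Not at hbig
  obtain ⟨u, huA, hu_disj, hu_cover⟩ :=
    Vitali.exists_disjoint_subfamily_covering_enlargement_closedBall A y (fun x => κ * d x) ρ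
      hbig 4 (by norm_num)
  have hu_count : u.Countable :=
    (hu_disj.mono fun b => ball_subset_closedBall).countable_of_isOpen (fun _ _ => isOpen_ball)
      fun b hb => nonempty_ball.2 (mul_pos hκ (hd b (huA hb)))
  have hcover : A ⊆ ⋃ b ∈ u, ball (y b) (5 * κ * d b) ∩ S := by
    intro a ha
    obtain ⟨b, hb, hab⟩ := hu_cover a ha
    have hmem : dist a (y b) ≤ 4 * (κ * d b) :=
      hab (mem_closedBall.2 (hdist a ha).le)
    refine mem_biUnion hb ⟨?_, hAS ha⟩
    rw [mem_ball]
    nlinarith [hd b (huA hb)]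
  have hsmall_disj : u.PairwiseDisjoint fun b => ball (y b) (α * d b) ∩ S :=
    hu_disj.mono_on fun b hb => inter_subset_left.trans <| ball_subset_closedBall.trans <|
      closedBall_subset_closedBall <| by nlinarith [hd b (huA hb)]
  calc μ A ≤ μ (⋃ b ∈ u, ball (y b) (5 * κ * d b) ∩ S) := measure_mono hcover
    _ ≤ ∑' b : u, μ (ball (y b) (5 * κ * d b) ∩ S) := measure_biUnion_le μ hu_count _
    _ ≤ ∑' b : u, c ^ m * μ (ball (y b) (α * d b) ∩ S) := by
      refine ENNReal.tsum_le_tsum fun b => ?_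
      have hdb := hd b (huA b.2)
      exact h.measure_ball_le_pow_mul (hy b (huA b.2)) (by positivity) (by nlinarith)
    _ = c ^ m * μ (⋃ b ∈ u, ball (y b) (α * d b) ∩ S) := by
      rw [ENNReal.tsum_mul_left, measure_biUnion hu_count hsmall_disj
        fun _ _ => measurableSet_ball.inter hS]
    _ ≤ c ^ m * μ E := by
      gcongr
      exact iUnion₂_subset fun b hb => hsub b (huA hb)

theorem DoublingOn.measure_le_pow_mul (h : DoublingOn μ S c) (hS : MeasurableSet S)
    {A E : Set X} (hAS : A ⊆ S) {α κ : ℝ} (hα : 0 < α) (hακ : α ≤ κ) {m : ℕ}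
    (hm : 5 * κ ≤ 2 ^ m * α)
    (hA : ∀ x ∈ A, ∃ y ∈ S, ∃ d > 0, dist x y < κ * d ∧ ball y (α * d) ∩ S ⊆ E) :
    μ A ≤ c ^ m * μ E := by
  rcases A.eq_empty_or_nonempty with rfl | ⟨x₀, -⟩
  · simp
  have hA_eq : A = ⋃ k : ℕ, A ∩ ball x₀ k := by rw [← inter_iUnion, iUnion_ball_nat, inter_univ]
  have hmono : Monotone fun k : ℕ => A ∩ ball x₀ k :=
    fun i j hij => inter_subset_inter_right _ (ball_subset_ball (Nat.cast_le.2 hij))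
  rw [hA_eq, hmono.measure_iUnion]
  exact iSup_le fun k => h.measure_le_pow_mul_of_subset_ball hS inter_subset_right
    (inter_subset_left.trans hAS) hα hακ hm fun x hx => hA x hx.1

end Doubling

theorem isLocallyFiniteMeasure_restrict_of_measure_ball_inter_lt_top {X : Type*}
    [PseudoMetricSpace X] [MeasurableSpace X] [OpensMeasurableSpace X] {μ : Measure X}
    {S : Set X} {x₀ : X} (h : ∀ r : ℝ, 0 < r → μ (ball x₀ r ∩ S) < ∞) :
    IsLocallyFiniteMeasure (μ.restrict S) :=
  ⟨fun x => ⟨ball x₀ (dist x x₀ + 1), isOpen_ball.mem_nhds (by simp [mem_ball]), by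
    rw [Measure.restrict_apply measurableSet_ball]
    exact h _ (by positivity)⟩⟩

section Cone

variable {n : ℕ} {Ω : Set (EuclideanSpace ℝ (Fin (n + 1)))} {α β : ℝ}
  {F : EuclideanSpace ℝ (Fin (n + 1)) → ℝ} {x Y : EuclideanSpace ℝ (Fin (n + 1))}

theorem mem_cone_iff_mem_ball :
    Y ∈ cone Ω α x ↔ Y ∈ Ω ∧ x ∈ ball Y ((1 + α) * bdist Ω Y) := by
  rw [mem_ball, dist_comm]
  rfl

theorem bdist_pos_of_mem_cone (hY : Y ∈ cone Ω α x) : 0 < bdist Ω Y := by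
  by_contra! h
  have hY' := hY.2
  rw [le_antisymm h infDist_nonneg, mul_zero] at hY'
  exact dist_nonneg.not_gt hY'

theorem exists_mem_frontier_of_mem_cone (hY : Y ∈ cone Ω β x) :
    ∃ y ∈ frontier Ω, dist x y < (2 + β) * bdist Ω Y ∧
      ∀ z ∈ ball y (α * bdist Ω Y), Y ∈ cone Ω α z := by
  have hpos := bdist_pos_of_mem_cone hY
  have hne : (frontier Ω).Nonempty := by
    by_contra! h
    simp [bdist, h] at hpos
  obtain ⟨y, hy, hYy⟩ := isClosed_frontier.exists_infDist_eq_dist hne Y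
  have hYy : dist Y y = bdist Ω Y := hYy.symm
  refine ⟨y, hy, ?_, fun z hz => ⟨hY.1, ?_⟩⟩
  · linarith [dist_triangle x Y y, dist_comm x Y, hY.2]
  · linarith [dist_triangle Y y z, dist_comm z y, mem_ball.1 hz]

theorem lt_ntMax_iff {t : ℝ≥0∞} :
    t < ntMax Ω α F x ↔ ∃ Y ∈ cone Ω α x, t < ENNReal.ofReal |F Y| :=
  lt_biSup_iff

theorem measurable_ntMax : Measurable (ntMax Ω α F) := by
  refine LowerSemicontinuous.measurable (lowerSemicontinuous_iff_isOpen_preimage.2 fun t => ?_)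
  have : ntMax Ω α F ⁻¹' Ioi t =
      ⋃ Y ∈ {Y | Y ∈ Ω ∧ t < ENNReal.ofReal |F Y|}, ball Y ((1 + α) * bdist Ω Y) := by
    ext x
    simp only [mem_preimage, mem_Ioi, lt_ntMax_iff, mem_cone_iff_mem_ball, mem_iUnion,
      mem_ofPred_eq, exists_prop, and_assoc]
    exact exists_congr fun _ => by tauto
  rw [this]
  exact isOpen_biUnion fun _ _ => isOpen_ball

theorem measure_lt_ntMax_le {μ : Measure (EuclideanSpace ℝ (Fin (n + 1)))} {c : ℝ≥0∞}
    (hμ : DoublingOn μ (frontier Ω) c) (hα : 0 < α) (hαβ : α ≤ β) {m : ℕ}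
    (hm : 5 * (2 + β) ≤ 2 ^ m * α) (t : ℝ≥0∞) :
    μ ({x | t < ntMax Ω β F x} ∩ frontier Ω) ≤
      c ^ m * μ ({x | t < ntMax Ω α F x} ∩ frontier Ω) := by
  refine hμ.measure_le_pow_mul isClosed_frontier.measurableSet inter_subset_right hα
    (by linarith) hm ?_
  rintro x ⟨hx, -⟩
  obtain ⟨Y, hY, htY⟩ := lt_ntMax_iff.1 hx
  obtain ⟨y, hy, hxy, hcone⟩ := exists_mem_frontier_of_mem_cone (α := α) hY
  exact ⟨y, hy, bdist Ω Y, bdist_pos_of_mem_cone hY, hxy,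
    fun z hz => ⟨lt_ntMax_iff.2 ⟨Y, hcone z hz.1, htY⟩, hz.2⟩⟩

end Cone

/-- change of aperture for the non-tangential maximal function in
`L^p(∂Ω,μ)`: `‖𝒩_β F‖_{L^p(μ)} ≤ C ‖𝒩_α F‖_{L^p(μ)}` with `C` depending only on
`p`, `α`, `β` and the doubling constant `c₃` of `μ`. -/
theorem statement4 (p α β : ℝ) (hp : 0 < p) (hα : 0 < α) (hαβ : α ≤ β)
    (c₃ : ℝ≥0∞) (hc₃ : 1 < c₃) (hc₃' : c₃ < ∞) :
    ∃ C : ℝ≥0∞, 0 < C ∧ C < ∞ ∧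
      ∀ (n : ℕ) (Ω : Set (EuclideanSpace ℝ (Fin (n + 1)))),
        IsOpen Ω → Ω.Nonempty → (frontier Ω).Nonempty →
        ∀ μ : Measure (EuclideanSpace ℝ (Fin (n + 1))),
          -- μ is a doubling measure on ∂Ω with constant c₃
          (∀ x ∈ frontier Ω, ∀ r : ℝ, 0 < r →
            0 < μ (ball x r ∩ frontier Ω) ∧ μ (ball x r ∩ frontier Ω) < ∞ ∧
              μ (ball x (2 * r) ∩ frontier Ω) ≤ c₃ * μ (ball x r ∩ frontier Ω)) →
          ∀ F : EuclideanSpace ℝ (Fin (n + 1)) → ℝ, ContinuousOn F Ω →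
            (∫⁻ x in frontier Ω, ntMax Ω β F x ^ p ∂μ) ^ p⁻¹ ≤
              C * (∫⁻ x in frontier Ω, ntMax Ω α F x ^ p ∂μ) ^ p⁻¹ := by
  obtain ⟨m, hm⟩ : ∃ m : ℕ, 5 * (2 + β) ≤ 2 ^ m * α := by
    obtain ⟨m, hm⟩ := pow_unbounded_of_one_lt (5 * (2 + β) / α) one_lt_two
    exact ⟨m, ((div_lt_iff₀ hα).1 hm).le⟩
  have hC₀ : c₃ ^ m ≠ 0 := pow_ne_zero _ (zero_lt_one.trans hc₃).ne'
  have hC_top : c₃ ^ m ≠ ∞ := ENNReal.pow_ne_top hc₃'.ne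
  refine ⟨(c₃ ^ m) ^ p⁻¹, ENNReal.rpow_pos (pos_iff_ne_zero.2 hC₀) hC_top,
    ENNReal.rpow_lt_top_of_nonneg (inv_nonneg.2 hp.le) hC_top, ?_⟩
  intro n Ω _ _ ⟨x₀, hx₀⟩ μ hμ F _
  -- by second countability, `μ.restrict (frontier Ω)` is then σ-finite, as layer cake needs
  have : IsLocallyFiniteMeasure (μ.restrict (frontier Ω)) :=
    isLocallyFiniteMeasure_restrict_of_measure_ball_inter_lt_top fun r hr => (hμ x₀ hx₀ r hr).2.1
  have hdistrib : ∀ t, μ.restrict (frontier Ω) {x | t < ntMax Ω β F x} ≤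
      c₃ ^ m * μ.restrict (frontier Ω) {x | t < ntMax Ω α F x} := fun t => by
    simp only [Measure.restrict_apply (measurableSet_lt measurable_const measurable_ntMax)]
    exact measure_lt_ntMax_le (fun x hx r hr => (hμ x hx r hr).2.2) hα hαβ hm t
  calc (∫⁻ x in frontier Ω, ntMax Ω β F x ^ p ∂μ) ^ p⁻¹
      ≤ (c₃ ^ m * ∫⁻ x in frontier Ω, ntMax Ω α F x ^ p ∂μ) ^ p⁻¹ :=
        ENNReal.rpow_le_rpow (lintegral_rpow_le_mul_of_meas_lt_le _ measurable_ntMax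
          measurable_ntMax hp hdistrib) (inv_nonneg.2 hp.le)
    _ = (c₃ ^ m) ^ p⁻¹ * (∫⁻ x in frontier Ω, ntMax Ω α F x ^ p ∂μ) ^ p⁻¹ :=
        ENNReal.mul_rpow_of_nonneg _ _ (inv_nonneg.2 hp.le)
end
end

section
/- For every α > 0 there exists a constant C_α > 1, depending only on α and the doubling constants c₃ of μ and c₄ of m, such that for every nonnegative Borel function F on Ω, every x ∈ ∂Ω and every 0 < r < diam(∂Ω), one has ∬_{B(x,r) ∩ Ω} F(X)² δ(X) ρ(X)^{-1} dm(X) ≤ C_α ∫_{Δ(x, (2+α)r)} S^α_{(1+α)r} F(y)² dμ(y). -/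
/-!
For `X ∈ B(x,r) ∩ Ω` with nearest boundary point `p = x̂(X)` and `d = δ(X)`, the weight
`δ ρ⁻¹` equals `d² μ(Δ(p,d)) / m(B(p,d) ∩ Ω)`, and doubling of `μ` bounds `μ(Δ(p,d))` by
`μ(Δ(p,αd))`, a surface ball contained in `Δ(x,(2+α)r)`. Writing `μ(Δ(p,αd))` as an integral in
`y` and exchanging the order of integration (Tonelli), for each `y` only the points `X` with
`|y - x̂(X)| < α δ(X)` remain; they lie in the truncated cone `Γ^α_{(1+α)r}(y)`, and doubling of
`m` lets `m(B(y,δ(X)) ∩ Ω)` replace `m(B(x̂(X),δ(X)) ∩ Ω)` in the denominator.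
-/

open Metric MeasureTheory Set
open scoped ENNReal

noncomputable section

/-- The square `S^α_r F(x)²` of the truncated conical square function. -/
def sqTr {n : ℕ} (Ω : Set (EuclideanSpace ℝ (Fin (n + 1))))
    (m : Measure (EuclideanSpace ℝ (Fin (n + 1)))) (α r : ℝ)
    (F : EuclideanSpace ℝ (Fin (n + 1)) → ℝ≥0∞) (x : EuclideanSpace ℝ (Fin (n + 1))) :
    ℝ≥0∞ :=
  ∫⁻ Y in cone Ω α x ∩ ball x r,
    F Y ^ 2 * ENNReal.ofReal (bdist Ω Y) ^ 2 / m (ball x (bdist Ω Y) ∩ Ω) ∂m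

/-- The density ratio `ρ(X) = m(B(x̂(X),δ(X)) ∩ Ω)/(δ(X) μ(Δ(x̂(X),δ(X))))`. -/
def densityRho {n : ℕ} (Ω : Set (EuclideanSpace ℝ (Fin (n + 1))))
    (μ m : Measure (EuclideanSpace ℝ (Fin (n + 1))))
    (xhat : EuclideanSpace ℝ (Fin (n + 1)) → EuclideanSpace ℝ (Fin (n + 1)))
    (X : EuclideanSpace ℝ (Fin (n + 1))) : ℝ≥0∞ :=
  m (ball (xhat X) (bdist Ω X) ∩ Ω) /
    (ENNReal.ofReal (bdist Ω X) * μ (ball (xhat X) (bdist Ω X) ∩ frontier Ω))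

theorem ENNReal.div_le_mul_div_of_le_mul {a b b' c : ℝ≥0∞} (hc₀ : c ≠ 0) (hc : c ≠ ∞)
    (h : b' ≤ c * b) : a / b ≤ c * (a / b') :=
  calc a / b = c * a / (c * b) := (ENNReal.mul_div_mul_left a b hc₀ hc).symm
    _ ≤ c * a / b' := ENNReal.div_le_div_left h _
    _ = c * (a / b') := mul_div_assoc _ _ _

section MetricMeasure

variable {X : Type*} [PseudoMetricSpace X] [MeasurableSpace X]

theorem sigmaFinite_of_measure_ball_lt_top (ν : Measure X) (x : X)
    (h : ∀ r : ℝ, 0 < r → ν (ball x r) < ∞) : SigmaFinite ν := by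
  refine ⟨⟨⟨fun i : ℕ => ball x i, fun _ => trivial, fun i => ?_, iUnion_ball_nat x⟩⟩⟩
  rcases Nat.eq_zero_or_pos i with rfl | hi
  · simp
  · exact h i (Nat.cast_pos.2 hi)

theorem measure_ball_two_pow_mul_inter_le_s7 {ν : Measure X} {S : Set X} {p : X} {c : ℝ≥0∞}
    (hν : ∀ s : ℝ, 0 < s → ν (ball p (2 * s) ∩ S) ≤ c * ν (ball p s ∩ S))
    {s : ℝ} (hs : 0 < s) (i : ℕ) :
    ν (ball p (2 ^ i * s) ∩ S) ≤ c ^ i * ν (ball p s ∩ S) := by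
  induction i with
  | zero => simp
  | succ i ih =>
    calc ν (ball p (2 ^ (i + 1) * s) ∩ S) = ν (ball p (2 * (2 ^ i * s)) ∩ S) := by ring_nf
      _ ≤ c * ν (ball p (2 ^ i * s) ∩ S) := hν _ (by positivity)
      _ ≤ c * (c ^ i * ν (ball p s ∩ S)) := by gcongr
      _ = c ^ (i + 1) * ν (ball p s ∩ S) := by ring

theorem measure_ball_inter_le_pow_mul {ν : Measure X} {S : Set X} {p : X} {c : ℝ≥0∞}
    (hν : ∀ s : ℝ, 0 < s → ν (ball p (2 * s) ∩ S) ≤ c * ν (ball p s ∩ S))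
    {s t : ℝ} (hs : 0 < s) {i : ℕ} (hts : t ≤ 2 ^ i * s) :
    ν (ball p t ∩ S) ≤ c ^ i * ν (ball p s ∩ S) :=
  (measure_mono (inter_subset_inter_left _ (ball_subset_ball hts))).trans
    (measure_ball_two_pow_mul_inter_le_s7 hν hs i)

variable [OpensMeasurableSpace X] [SecondCountableTopology X]

theorem measurable_measure_ball (ν : Measure X) [SFinite ν] :
    Measurable fun a : X × ℝ => ν (ball a.1 a.2) :=
  measurable_measure_prodMk_left
    (measurableSet_lt (measurable_snd.dist measurable_fst.fst) measurable_fst.snd)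

theorem lintegral_mul_measure_ball_eq (μ ν : Measure X) [SFinite μ] [SFinite ν]
    {g : X → ℝ≥0∞} {p : X → X} {s : X → ℝ} (hg : Measurable g) (hp : Measurable p)
    (hs : Measurable s) :
    ∫⁻ z, g z * μ (ball (p z) (s z)) ∂ν = ∫⁻ y, ∫⁻ z in {z | dist y (p z) < s z}, g z ∂ν ∂μ := by
  set T : Set (X × X) := {q | dist q.2 (p q.1) < s q.1}
  have hT : MeasurableSet T :=
    measurableSet_lt (measurable_snd.dist (hp.comp measurable_fst)) (hs.comp measurable_fst)
  calc ∫⁻ z, g z * μ (ball (p z) (s z)) ∂ν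
      = ∫⁻ z, ∫⁻ y, T.indicator (fun q => g q.1) (z, y) ∂μ ∂ν := by
        congr with z
        exact (lintegral_indicator_const measurableSet_ball (g z)).symm
    _ = ∫⁻ y, ∫⁻ z, T.indicator (fun q => g q.1) (z, y) ∂ν ∂μ :=
        lintegral_lintegral_swap ((hg.comp measurable_fst).indicator hT).aemeasurable
    _ = ∫⁻ y, ∫⁻ z in {z | dist y (p z) < s z}, g z ∂ν ∂μ := by
        congr with y
        exact lintegral_indicator
          (measurableSet_lt (measurable_const.dist hp) hs) g

end MetricMeasure

def sqTrIntegrand {n : ℕ} (Ω : Set (EuclideanSpace ℝ (Fin (n + 1))))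
    (m : Measure (EuclideanSpace ℝ (Fin (n + 1))))
    (F : EuclideanSpace ℝ (Fin (n + 1)) → ℝ≥0∞) (z X : EuclideanSpace ℝ (Fin (n + 1))) :
    ℝ≥0∞ :=
  F X ^ 2 * ENNReal.ofReal (bdist Ω X) ^ 2 / m (ball z (bdist Ω X) ∩ Ω)

section Domain

variable {n : ℕ} {Ω : Set (EuclideanSpace ℝ (Fin (n + 1)))}
  {μ m : Measure (EuclideanSpace ℝ (Fin (n + 1)))}
  {xhat : EuclideanSpace ℝ (Fin (n + 1)) → EuclideanSpace ℝ (Fin (n + 1))}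
  {F : EuclideanSpace ℝ (Fin (n + 1)) → ℝ≥0∞} {α r : ℝ} {x X y : EuclideanSpace ℝ (Fin (n + 1))}

theorem sqTr_eq_setLIntegral_sqTrIntegrand :
    sqTr Ω m α r F y = ∫⁻ Y in cone Ω α y ∩ ball y r, sqTrIntegrand Ω m F y Y ∂m :=
  rfl

variable (Ω) in
theorem measurable_bdist : Measurable (bdist Ω) :=
  (continuous_infDist_pt _).measurable

theorem bdist_pos_s7 (hΩ : IsOpen Ω) (hfr : (frontier Ω).Nonempty) (hX : X ∈ Ω) :
    0 < bdist Ω X := by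
  refine (isClosed_frontier.notMem_iff_infDist_pos hfr).1 fun h => ?_
  rw [hΩ.frontier_eq] at h
  exact h.2 hX

theorem measurable_sqTrIntegrand [SFinite (m.restrict Ω)] (hF : Measurable F)
    {z : EuclideanSpace ℝ (Fin (n + 1)) → EuclideanSpace ℝ (Fin (n + 1))} (hz : Measurable z) :
    Measurable fun X => sqTrIntegrand Ω m F (z X) X := by
  have hball := (measurable_measure_ball (m.restrict Ω)).comp (hz.prodMk (measurable_bdist Ω))
  simp only [Function.comp_def, Measure.restrict_apply measurableSet_ball] at hball
  exact ((hF.pow_const 2).mul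
    ((ENNReal.measurable_ofReal.comp (measurable_bdist Ω)).pow_const 2)).div hball

theorem mul_inv_densityRho_eq (hm₀ : m (ball (xhat X) (bdist Ω X) ∩ Ω) ≠ 0)
    (hm : m (ball (xhat X) (bdist Ω X) ∩ Ω) ≠ ∞) :
    F X ^ 2 * ENNReal.ofReal (bdist Ω X) * (densityRho Ω μ m xhat X)⁻¹ =
      sqTrIntegrand Ω m F (xhat X) X * μ (ball (xhat X) (bdist Ω X) ∩ frontier Ω) := by
  rw [densityRho, ENNReal.inv_div (Or.inr hm) (Or.inr hm₀), sqTrIntegrand]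
  simp only [div_eq_mul_inv]
  ring

theorem mem_cone_inter_ball {p : EuclideanSpace ℝ (Fin (n + 1))} (hα : 0 < α) (hX : X ∈ Ω)
    (hXp : dist X p = bdist Ω X) (hyp : dist y p < α * bdist Ω X) (hr : bdist Ω X < r) :
    X ∈ cone Ω α y ∩ ball y ((1 + α) * r) := by
  have hXy : dist X y < (1 + α) * bdist Ω X := by
    linarith [dist_triangle X p y, dist_comm y p]
  exact ⟨⟨hX, hXy⟩, hXy.trans_le (by gcongr)⟩

theorem mul_inv_densityRho_le {c₃ : ℝ≥0∞} {j : ℕ} (hα : 0 < α) (hj : 1 ≤ 2 ^ j * α)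
    (hΩ : IsOpen Ω) (hfr : (frontier Ω).Nonempty)
    (hμ : ∀ p ∈ frontier Ω, ∀ s : ℝ, 0 < s →
      μ (ball p (2 * s) ∩ frontier Ω) ≤ c₃ * μ (ball p s ∩ frontier Ω))
    (hm : ∀ p ∈ frontier Ω, ∀ s : ℝ, 0 < s → 0 < m (ball p s ∩ Ω) ∧ m (ball p s ∩ Ω) < ∞)
    (hxhat : ∀ X ∈ Ω, xhat X ∈ frontier Ω ∧ dist X (xhat X) = bdist Ω X)
    (hx : x ∈ frontier Ω) (hX : X ∈ ball x r ∩ Ω) :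
    F X ^ 2 * ENNReal.ofReal (bdist Ω X) * (densityRho Ω μ m xhat X)⁻¹ ≤
      c₃ ^ j * (sqTrIntegrand Ω m F (xhat X) X *
        μ.restrict (ball x ((2 + α) * r) ∩ frontier Ω) (ball (xhat X) (α * bdist Ω X))) := by
  obtain ⟨hp, hXp⟩ := hxhat X hX.2
  have hd := bdist_pos_s7 hΩ hfr hX.2
  have hdr : bdist Ω X < r := (infDist_le_dist_of_mem hx).trans_lt hX.1
  have hsub : ball (xhat X) (α * bdist Ω X) ⊆ ball x ((2 + α) * r) := by
    intro z hz
    rw [mem_ball] at hz ⊢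
    linarith [dist_triangle4 z (xhat X) X x, dist_comm X (xhat X), mem_ball.1 hX.1,
      mul_lt_mul_of_pos_left hdr hα]
  obtain ⟨hm₀, hm_top⟩ := hm _ hp _ hd
  rw [mul_inv_densityRho_eq hm₀.ne' hm_top.ne, Measure.restrict_apply measurableSet_ball,
    ← inter_assoc, inter_eq_left.2 hsub, mul_left_comm]
  gcongr
  exact measure_ball_inter_le_pow_mul (hμ _ hp) (by positivity) (by nlinarith)

theorem setLIntegral_sqTrIntegrand_le {c₄ : ℝ≥0∞} {k : ℕ} (hα : 0 < α) (hk : 1 + α ≤ 2 ^ k)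
    (hc₀ : c₄ ≠ 0) (hc : c₄ ≠ ∞) (hΩ : IsOpen Ω) (hfr : (frontier Ω).Nonempty)
    (hm : ∀ p ∈ frontier Ω, ∀ s : ℝ, 0 < s → m (ball p (2 * s) ∩ Ω) ≤ c₄ * m (ball p s ∩ Ω))
    (hxhat_meas : Measurable xhat)
    (hxhat : ∀ X ∈ Ω, xhat X ∈ frontier Ω ∧ dist X (xhat X) = bdist Ω X)
    (hx : x ∈ frontier Ω) (y : EuclideanSpace ℝ (Fin (n + 1))) :
    ∫⁻ X in {X | dist y (xhat X) < α * bdist Ω X}, sqTrIntegrand Ω m F (xhat X) X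
        ∂m.restrict (ball x r ∩ Ω) ≤
      c₄ ^ k * sqTr Ω m α ((1 + α) * r) F y := by
  set T := {X | dist y (xhat X) < α * bdist Ω X}
  have hT : MeasurableSet T :=
    measurableSet_lt (measurable_const.dist hxhat_meas) ((measurable_bdist Ω).const_mul α)
  have hle : ∀ X ∈ T ∩ (ball x r ∩ Ω),
      sqTrIntegrand Ω m F (xhat X) X ≤ c₄ ^ k * sqTrIntegrand Ω m F y X := by
    rintro X ⟨hXT, -, hXΩ⟩
    have hp := (hxhat X hXΩ).1
    have hd := bdist_pos_s7 hΩ hfr hXΩ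
    refine ENNReal.div_le_mul_div_of_le_mul (pow_ne_zero k hc₀) (ENNReal.pow_ne_top hc) ?_
    calc m (ball y (bdist Ω X) ∩ Ω) ≤ m (ball (xhat X) ((1 + α) * bdist Ω X) ∩ Ω) :=
          measure_mono (inter_subset_inter_left _ (ball_subset_ball' (by linarith [hXT.out])))
      _ ≤ c₄ ^ k * m (ball (xhat X) (bdist Ω X) ∩ Ω) :=
          measure_ball_inter_le_pow_mul (hm _ hp) hd (by nlinarith)
  have hcone : T ∩ (ball x r ∩ Ω) ⊆ cone Ω α y ∩ ball y ((1 + α) * r) :=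
    fun X ⟨hXT, hXx, hXΩ⟩ => mem_cone_inter_ball hα hXΩ (hxhat X hXΩ).2 hXT
      ((infDist_le_dist_of_mem hx).trans_lt hXx)
  rw [Measure.restrict_restrict hT]
  calc ∫⁻ X in T ∩ (ball x r ∩ Ω), sqTrIntegrand Ω m F (xhat X) X ∂m
      ≤ ∫⁻ X in T ∩ (ball x r ∩ Ω), c₄ ^ k * sqTrIntegrand Ω m F y X ∂m :=
        setLIntegral_mono' (hT.inter (measurableSet_ball.inter hΩ.measurableSet)) hle
    _ = c₄ ^ k * ∫⁻ X in T ∩ (ball x r ∩ Ω), sqTrIntegrand Ω m F y X ∂m :=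
        lintegral_const_mul' _ _ (ENNReal.pow_ne_top hc)
    _ ≤ c₄ ^ k * sqTr Ω m α ((1 + α) * r) F y := by
        rw [sqTr_eq_setLIntegral_sqTrIntegrand]
        exact mul_le_mul_right (lintegral_mono_set hcone) _

end Domain

/-- the Carleson-type integral `∬_{B(x,r)∩Ω} F² δ ρ⁻¹ dm` is controlled
by the `L²(μ)` integral of the truncated conical square function over an enlarged
surface ball, with a constant depending only on `α`, `c₃` and `c₄`. -/
theorem statement7 (α : ℝ) (hα : 0 < α) (c₃ c₄ : ℝ≥0∞)
    (hc₃ : 1 < c₃) (hc₃' : c₃ < ∞) (hc₄ : 1 ≤ c₄) (hc₄' : c₄ < ∞) :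
    ∃ C : ℝ≥0∞, 1 < C ∧ C < ∞ ∧
      ∀ (n : ℕ) (Ω : Set (EuclideanSpace ℝ (Fin (n + 1)))),
        IsOpen Ω → Ω.Nonempty → (frontier Ω).Nonempty →
        ∀ μ m : Measure (EuclideanSpace ℝ (Fin (n + 1))),
          -- μ is a doubling measure on ∂Ω with constant c₃
          (∀ x ∈ frontier Ω, ∀ r : ℝ, 0 < r →
            0 < μ (ball x r ∩ frontier Ω) ∧ μ (ball x r ∩ frontier Ω) < ∞ ∧
              μ (ball x (2 * r) ∩ frontier Ω) ≤ c₃ * μ (ball x r ∩ frontier Ω)) →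
          -- m is doubling up to the boundary with constant c₄
          (∀ X ∈ closure Ω, ∀ r : ℝ, 0 < r →
            0 < m (ball X r ∩ Ω) ∧ m (ball X r ∩ Ω) < ∞ ∧
              m (ball X (2 * r) ∩ Ω) ≤ c₄ * m (ball X r ∩ Ω)) →
          -- x̂ is a measurable nearest boundary point map
          ∀ xhat : EuclideanSpace ℝ (Fin (n + 1)) → EuclideanSpace ℝ (Fin (n + 1)),
            Measurable xhat →
            (∀ X ∈ Ω, xhat X ∈ frontier Ω ∧ dist X (xhat X) = bdist Ω X) →
            ∀ F : EuclideanSpace ℝ (Fin (n + 1)) → ℝ≥0∞, Measurable F →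
              ∀ x ∈ frontier Ω, ∀ r : ℝ, 0 < r →
                ENNReal.ofReal r < EMetric.diam (frontier Ω) →
                ∫⁻ X in ball x r ∩ Ω,
                    F X ^ 2 * ENNReal.ofReal (bdist Ω X) * (densityRho Ω μ m xhat X)⁻¹ ∂m ≤
                  C * ∫⁻ y in ball x ((2 + α) * r) ∩ frontier Ω,
                        sqTr Ω m α ((1 + α) * r) F y ∂μ := by
  -- the summand `1` forces `j ≠ 0`, hence `1 < C`
  obtain ⟨j, hj⟩ := pow_unbounded_of_one_lt (1 + α⁻¹) one_lt_two
  obtain ⟨k, hk⟩ := pow_unbounded_of_one_lt (1 + α) one_lt_two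
  have hj₀ : j ≠ 0 := by rintro rfl; linarith [inv_pos.2 hα]
  have hjα : 1 ≤ 2 ^ j * α :=
    calc 1 = α⁻¹ * α := (inv_mul_cancel₀ hα.ne').symm
      _ ≤ 2 ^ j * α := by gcongr; linarith
  have hc₃j : c₃ ^ j ≠ ∞ := ENNReal.pow_ne_top hc₃'.ne
  have hc₄k : c₄ ^ k ≠ ∞ := ENNReal.pow_ne_top hc₄'.ne
  refine ⟨c₃ ^ j * c₄ ^ k, one_lt_mul_of_lt_of_le (one_lt_pow₀ hc₃ hj₀) (one_le_pow₀ hc₄),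
    ENNReal.mul_lt_top hc₃j.lt_top hc₄k.lt_top, ?_⟩
  intro n Ω hΩ _ hfr μ m hμ hm xhat hxhat_meas hxhat F hF x hx r hr _
  have hm_fr := fun p (hp : p ∈ frontier Ω) => hm p (frontier_subset_closure hp)
  have := sigmaFinite_of_measure_ball_lt_top (m.restrict Ω) x fun s hs => by
    simpa only [Measure.restrict_apply measurableSet_ball] using (hm_fr x hx s hs).2.1
  have := isFiniteMeasure_restrict.2 (hμ x hx ((2 + α) * r) (by positivity)).2.1.ne
  have := isFiniteMeasure_restrict.2 (hm_fr x hx r hr).2.1.ne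
  calc _ ≤ ∫⁻ X in ball x r ∩ Ω, c₃ ^ j * (sqTrIntegrand Ω m F (xhat X) X *
          μ.restrict (ball x ((2 + α) * r) ∩ frontier Ω) (ball (xhat X) (α * bdist Ω X))) ∂m :=
        setLIntegral_mono' (measurableSet_ball.inter hΩ.measurableSet) fun X hX =>
          mul_inv_densityRho_le hα hjα hΩ hfr (fun p hp s hs => (hμ p hp s hs).2.2)
            (fun p hp s hs => (hm_fr p hp s hs).imp_right And.left) hxhat hx hX
    _ = c₃ ^ j * ∫⁻ y in ball x ((2 + α) * r) ∩ frontier Ω, ∫⁻ X in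
          {X | dist y (xhat X) < α * bdist Ω X}, sqTrIntegrand Ω m F (xhat X) X
            ∂m.restrict (ball x r ∩ Ω) ∂μ := by
        rw [lintegral_const_mul' _ _ hc₃j, lintegral_mul_measure_ball_eq _ _
          (measurable_sqTrIntegrand hF hxhat_meas) hxhat_meas ((measurable_bdist Ω).const_mul α)]
    _ ≤ c₃ ^ j * ∫⁻ y in ball x ((2 + α) * r) ∩ frontier Ω,
          c₄ ^ k * sqTr Ω m α ((1 + α) * r) F y ∂μ := by
        gcongr with y
        exact setLIntegral_sqTrIntegrand_le hα hk.le (by positivity) hc₄'.ne hΩ hfr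
          (fun p hp s hs => (hm_fr p hp s hs).2.2) hxhat_meas hxhat hx y
    _ = _ := by rw [lintegral_const_mul' _ _ hc₄k, mul_assoc]
end
end

section
/- Let n ≥ 1, 0 < d < n, let Γ ⊂ ℝ^{n+1} be a nonempty closed d-ADR set with constant C₁ ≥ 1, let γ ∈ (n−d−1, n−d+1), and let m(A) := ∫_A dist(Y, Γ)^{−γ} dY. Then there exists C ≥ 1, depending only on n, d, γ and C₁, such that: (i) C^{-1} r^{n+1} dist(X, Γ)^{−γ} ≤ m(B(X,r)) ≤ C r^{n+1} dist(X, Γ)^{−γ} whenever X ∈ ℝ^{n+1} and 0 < 2r < dist(X, Γ); and (ii) m(B(X,2r)) ≤ C m(B(X,r)) for all X ∈ ℝ^{n+1} and r > 0; in particular m is a doubling measure on ℝ^{n+1}. -/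
open Metric MeasureTheory Set
open scoped ENNReal

noncomputable section

/-- The measure `m(A) = ∫_A dist(Y,Γ)^{-γ} dY`. -/
def distWeightMeasure {n : ℕ} (Γ : Set (EuclideanSpace ℝ (Fin (n + 1)))) (γ : ℝ)
    (A : Set (EuclideanSpace ℝ (Fin (n + 1)))) : ℝ≥0∞ :=
  ∫⁻ Y in A, ENNReal.ofReal (Metric.infDist Y Γ ^ (-γ))

/-!
Far from `Γ` (`2r < dist(X, Γ)`) the weight `dist(·, Γ)^(-γ)` varies by at most a factor
`2^|γ|` on `B(X, r)`, which gives (i) and doubling for such balls. Near `Γ` both `m(B(X, r))`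
and `m(B(X, 2r))` are comparable to `r^(n+1-γ)`. The key geometric input is that, by
Ahlfors regularity, the `ρ`-neighbourhood of `Γ` meets `B(p, R)` (`p ∈ Γ`) in a set of volume
`≲ ρ^(n+1-d) R^d`. Summing over dyadic shells `{dist(·, Γ) ≃ 2^-k R}` gives the upper bound
`m(B(p, R)) ≲ R^(n+1-γ)`, the series being geometric because `γ < n + 1 - d`; for the lower
bound, a thin neighbourhood of `Γ` fills at most half of `B(X, r)`, and on the rest the
weight is `≳ r^(-γ)`.
-/

open Module Filter Topology

theorem rpow_le_rpow_abs_mul_rpow {K a t : ℝ} (γ : ℝ) (ha : 0 < a) (ht : 0 < t)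
    (hat : a ≤ K * t) (hta : t ≤ K * a) : t ^ γ ≤ K ^ |γ| * a ^ γ := by
  have hK : 0 < K := pos_of_mul_pos_left (ht.trans_le hta) ha.le
  rcases le_or_gt 0 γ with hγ | hγ
  · rw [abs_of_nonneg hγ, ← Real.mul_rpow hK.le ha.le]
    exact Real.rpow_le_rpow ht.le hta hγ
  · calc t ^ γ ≤ (a / K) ^ γ :=
          Real.rpow_le_rpow_of_nonpos (by positivity) ((div_le_iff₀' hK).2 hat) hγ.le
      _ = K ^ |γ| * a ^ γ := by
          rw [abs_of_neg hγ, Real.div_rpow ha.le hK.le, Real.rpow_neg hK.le]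
          ring

theorem tendsto_mul_rpow_mul_nhds_zero {s : ℝ} (hs : 0 < s) (a b : ℝ) :
    Tendsto (fun ρ : ℝ => a * ρ ^ s * b) (𝓝 0) (𝓝 0) := by
  have h := (Real.continuousAt_rpow_const 0 s (Or.inr hs.le)).tendsto
  rw [Real.zero_rpow hs.ne'] at h
  simpa using (h.const_mul a).mul_const b

theorem le_ofReal_mul_of_le_of_le {a b : ℝ≥0∞} {u v C : ℝ} (hC : 0 ≤ C)
    (ha : a ≤ ENNReal.ofReal u) (hb : ENNReal.ofReal v ≤ b) (huv : u ≤ C * v) :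
    a ≤ ENNReal.ofReal C * b :=
  calc a ≤ ENNReal.ofReal (C * v) := ha.trans (ENNReal.ofReal_le_ofReal huv)
    _ = ENNReal.ofReal C * ENNReal.ofReal v := ENNReal.ofReal_mul hC
    _ ≤ ENNReal.ofReal C * b := by gcongr

section PseudoMetricSpace

variable {X : Type*} [PseudoMetricSpace X] {s : Set X}

theorem infDist_comparable_of_mem_ball {x y : X} {r : ℝ} (hr : 2 * r < infDist x s)
    (hy : y ∈ ball x r) : infDist x s ≤ 2 * infDist y s ∧ infDist y s ≤ 2 * infDist x s := by
  have h₁ : infDist x s ≤ infDist y s + dist x y := infDist_le_infDist_add_dist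
  have h₂ : infDist y s ≤ infDist x s + dist y x := infDist_le_infDist_add_dist
  rw [mem_ball] at hy
  rw [dist_comm] at h₁
  constructor <;> linarith

theorem ball_subset_infDist_eq_zero_union_iUnion_annulus {p : X} (hp : p ∈ s) {R : ℝ}
    (hR : 0 < R) :
    ball p R ⊆ ({Y | infDist Y s = 0} ∩ ball p R) ∪
      ⋃ k : ℕ, {Y | (1 / 2) ^ k * R / 2 < infDist Y s ∧ infDist Y s ≤ (1 / 2) ^ k * R} ∩
        ball p R := by
  intro Y hY
  rcases (infDist_nonneg (x := Y) (s := s)).eq_or_lt with h | h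
  · exact Or.inl ⟨h.symm, hY⟩
  have hYR : infDist Y s < R := (infDist_le_dist_of_mem hp).trans_lt hY
  obtain ⟨k, hk₁, hk₂⟩ := exists_nat_pow_near_of_lt_one (div_pos h hR)
    ((div_le_one hR).2 hYR.le) (by norm_num : (0 : ℝ) < 1 / 2) (by norm_num)
  rw [lt_div_iff₀ hR, pow_succ] at hk₁
  rw [div_le_iff₀ hR] at hk₂
  exact Or.inr (mem_iUnion.2 ⟨k, ⟨by linarith, hk₂⟩, hY⟩)

end PseudoMetricSpace

section MetricSpace

variable {X : Type*} [MetricSpace X]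

theorem exists_pairwise_le_dist_forall_exists_dist_lt (s : Set X) {ρ : ℝ} (hρ : 0 < ρ) :
    ∃ N ⊆ s, N.Pairwise (fun x y => ρ ≤ dist x y) ∧ ∀ x ∈ s, ∃ y ∈ N, dist x y < ρ := by
  let U : SetRel X X := {xy | dist xy.1 xy.2 < ρ}
  have : U.IsRefl := ⟨fun x => by simp [U, hρ]⟩
  have : U.IsSymm := ⟨fun x y h => by simpa [U, dist_comm] using h⟩
  obtain ⟨N, -, hN⟩ := zorn_subset_nonempty {N | N ⊆ s ∧ SetRel.IsSeparated U N}
    (fun c hc hchain _ => ⟨⋃₀ c, ⟨sUnion_subset fun t ht => (hc ht).1,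
      (pairwise_sUnion hchain.directedOn).2 fun t ht => (hc ht).2⟩,
      fun _ => subset_sUnion_of_mem⟩) ∅ ⟨empty_subset _, .empty⟩
  exact ⟨N, hN.prop.1, hN.prop.2.mono' fun x y h => not_lt.1 h,
    SetRel.IsCover.of_maximal_isSeparated hN⟩

variable [MeasurableSpace X] [OpensMeasurableSpace X] (ν : Measure X)

theorem exists_finset_coe_eq_card_mul_le_of_measure_ball {S U : Set X} {t a b : ℝ}
    (hsep : S.Pairwise fun x y => 2 * t ≤ dist x y) (ha : 0 < a) (hb : 0 ≤ b)
    (hball : ∀ s ∈ S, ENNReal.ofReal a ≤ ν (ball s t) ∧ ball s t ⊆ U)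
    (hU : ν U ≤ ENNReal.ofReal b) :
    ∃ F : Finset X, ↑F = S ∧ F.card * a ≤ b := by
  have hfinset : ∀ F : Finset X, ↑F ⊆ S → F.card * a ≤ b := by
    intro F hF
    have hdisj : (F : Set X).PairwiseDisjoint fun s => ball s t := fun x hx y hy hxy =>
      ball_disjoint_ball (by linarith [hsep (hF hx) (hF hy) hxy])
    rw [← ENNReal.ofReal_le_ofReal_iff hb, ENNReal.ofReal_mul (by positivity),
      ENNReal.ofReal_natCast]
    calc (F.card : ℝ≥0∞) * ENNReal.ofReal a = ∑ s ∈ F, ENNReal.ofReal a := by simp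
      _ ≤ ∑ s ∈ F, ν (ball s t) := Finset.sum_le_sum fun s hs => (hball s (hF hs)).1
      _ = ν (⋃ s ∈ F, ball s t) := (measure_biUnion_finset hdisj fun _ _ => measurableSet_ball).symm
      _ ≤ ν U := measure_mono (iUnion₂_subset fun s hs => (hball s (hF hs)).2)
      _ ≤ ENNReal.ofReal b := hU
  have hfin : S.Finite := by
    by_contra hinf
    obtain ⟨F, hFS, hcard⟩ := Set.Infinite.exists_subset_card_eq hinf (⌈b / a⌉₊ + 1)
    have := hfinset F hFS
    rw [hcard, Nat.cast_add, Nat.cast_one, ← le_div_iff₀ ha] at this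
    linarith [Nat.le_ceil (b / a)]
  exact ⟨hfin.toFinset, hfin.coe_toFinset, hfinset _ hfin.coe_toFinset.subset⟩

end MetricSpace

def IsADR {X : Type*} [MetricSpace X] [MeasurableSpace X] [BorelSpace X] (d C₁ : ℝ)
    (Γ : Set X) : Prop :=
  ∀ x ∈ Γ, ∀ r : ℝ, 0 < r → ENNReal.ofReal r < ediam Γ →
    ENNReal.ofReal (C₁⁻¹ * r ^ d) ≤ μH[d] (Γ ∩ ball x r) ∧
      μH[d] (Γ ∩ ball x r) ≤ ENNReal.ofReal (C₁ * r ^ d)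

def distWeight {X : Type*} [PseudoMetricSpace X] (Γ : Set X) (γ : ℝ) (Y : X) : ℝ≥0∞ :=
  ENNReal.ofReal (infDist Y Γ ^ (-γ))

theorem measurable_distWeight {X : Type*} [PseudoMetricSpace X] [MeasurableSpace X]
    [OpensMeasurableSpace X] (Γ : Set X) (γ : ℝ) : Measurable (distWeight Γ γ) :=
  ((continuous_infDist_pt Γ).measurable.pow_const _).ennreal_ofReal

section DistWeight

variable {X : Type*} [PseudoMetricSpace X] [MeasurableSpace X] (μ : Measure X)
  {Γ : Set X} {γ : ℝ}

theorem setLIntegral_distWeight_le {A : Set X} {c : ℝ}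
    (h : ∀ Y ∈ A, infDist Y Γ ^ (-γ) ≤ c) :
    ∫⁻ Y in A, distWeight Γ γ Y ∂μ ≤ ENNReal.ofReal c * μ A :=
  (setLIntegral_mono measurable_const fun Y hY => ENNReal.ofReal_le_ofReal (h Y hY)).trans_eq
    (setLIntegral_const A _)

theorem le_setLIntegral_distWeight [OpensMeasurableSpace X] {A : Set X} {c : ℝ}
    (h : ∀ Y ∈ A, c ≤ infDist Y Γ ^ (-γ)) :
    ENNReal.ofReal c * μ A ≤ ∫⁻ Y in A, distWeight Γ γ Y ∂μ :=
  (setLIntegral_const A _).symm.trans_le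
    (setLIntegral_mono (measurable_distWeight Γ γ) fun Y hY => ENNReal.ofReal_le_ofReal (h Y hY))

theorem setLIntegral_distWeight_annulus_le {K ρ R s d : ℝ} {p : X} (hρ : 0 < ρ)
    (htube : μ ({Y | infDist Y Γ ≤ ρ} ∩ ball p R) ≤ ENNReal.ofReal (K * ρ ^ s * R ^ d)) :
    ∫⁻ Y in {Y | ρ / 2 < infDist Y Γ ∧ infDist Y Γ ≤ ρ} ∩ ball p R, distWeight Γ γ Y ∂μ ≤
      ENNReal.ofReal (2 ^ |γ| * K * R ^ d * ρ ^ (s - γ)) := by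
  calc _ ≤ ENNReal.ofReal (2 ^ |γ| * ρ ^ (-γ)) *
          μ ({Y | ρ / 2 < infDist Y Γ ∧ infDist Y Γ ≤ ρ} ∩ ball p R) :=
        setLIntegral_distWeight_le μ fun Y hY => ?_
    _ ≤ ENNReal.ofReal (2 ^ |γ| * ρ ^ (-γ)) * μ ({Y | infDist Y Γ ≤ ρ} ∩ ball p R) := by
        gcongr
        exact fun h => h.2
    _ ≤ ENNReal.ofReal (2 ^ |γ| * ρ ^ (-γ)) *
          ENNReal.ofReal (K * ρ ^ s * R ^ d) := by gcongr
    _ = _ := by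
        rw [← ENNReal.ofReal_mul (by positivity), sub_eq_add_neg _ γ, Real.rpow_add hρ]
        ring_nf
  obtain ⟨h1, h2⟩ := hY.1
  simpa [abs_neg] using rpow_le_rpow_abs_mul_rpow (-γ) hρ (by linarith) (by linarith)
    (by linarith)

end DistWeight

section FiniteDimensional

variable {E : Type*} [NormedAddCommGroup E] [NormedSpace ℝ E] [FiniteDimensional ℝ E]
  [MeasurableSpace E] [BorelSpace E] {d C₁ γ : ℝ} {Γ : Set E}

theorem addHaar_ball_eq_ofReal (μ : Measure E) [μ.IsAddHaarMeasure] (x : E) {r : ℝ}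
    (hr : 0 < r) :
    μ (ball x r) = ENNReal.ofReal (μ.real (ball 0 1) * r ^ (finrank ℝ E : ℝ)) := by
  rw [μ.addHaar_ball_of_pos x hr, Real.rpow_natCast, mul_comm,
    ENNReal.ofReal_mul measureReal_nonneg, measureReal_def,
    ENNReal.ofReal_toReal measure_ball_lt_top.ne]

theorem IsADR.hausdorffMeasure_le_of_ediam_eq (hΓ : IsADR d C₁ Γ) (hd : 0 ≤ d)
    (hC₁ : 0 ≤ C₁) {D : ℝ} (hD0 : 0 < D) (hD : ediam Γ = ENNReal.ofReal D) :
    μH[d] Γ ≤ ENNReal.ofReal (32 ^ (finrank ℝ E : ℝ) * C₁ * D ^ d) := by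
  let μ : Measure E := Measure.addHaar
  set N : ℝ := (finrank ℝ E : ℝ)
  set ω := μ.real (ball 0 1)
  have hω : 0 < ω := ENNReal.toReal_pos (measure_ball_pos μ 0 one_pos).ne' measure_ball_lt_top.ne
  obtain ⟨p, hp⟩ : Γ.Nonempty := nonempty_iff_ne_empty.2 fun h => by
    rw [h, ediam_empty, eq_comm, ENNReal.ofReal_eq_zero] at hD; linarith
  have hdist : ∀ x ∈ Γ, dist x p ≤ D := fun x hx => by
    have := (edist_le_ediam_of_mem hx hp).trans_eq hD
    rwa [edist_dist, ENNReal.ofReal_le_ofReal_iff hD0.le] at this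
  obtain ⟨S, hSΓ, hsep, hcov⟩ := exists_pairwise_le_dist_forall_exists_dist_lt Γ (ρ := D / 8)
    (by positivity)
  obtain ⟨F, rfl, hF⟩ := exists_finset_coe_eq_card_mul_le_of_measure_ball μ (t := D / 16)
    (U := ball p (2 * D)) (a := ω * (D / 16) ^ N) (b := ω * (2 * D) ^ N)
    (fun x hx y hy hxy => by linarith [hsep hx hy hxy]) (by positivity) (by positivity)
    (fun s hs => ⟨(addHaar_ball_eq_ofReal μ s (by positivity)).ge,
      ball_subset_ball' (by linarith [hdist s (hSΓ hs)])⟩)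
    (addHaar_ball_eq_ofReal μ p (by positivity)).le
  have hcard : (F.card : ℝ) ≤ 32 ^ N := by
    rw [show 2 * D = 32 * (D / 16) by ring, Real.mul_rpow (by norm_num) (by positivity)] at hF
    exact le_of_mul_le_mul_right (by linarith) (by positivity : 0 < ω * (D / 16) ^ N)
  have hcover : Γ ⊆ ⋃ s ∈ F, Γ ∩ ball s (D / 8) := fun x hx => by
    obtain ⟨s, hs, hxs⟩ := hcov x hx
    exact mem_biUnion hs ⟨hx, hxs⟩
  calc μH[d] Γ ≤ ∑ s ∈ F, μH[d] (Γ ∩ ball s (D / 8)) :=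
        (measure_mono hcover).trans (measure_biUnion_finset_le F _)
    _ ≤ ∑ s ∈ F, ENNReal.ofReal (C₁ * D ^ d) := by
        refine Finset.sum_le_sum fun s hs => ((hΓ s (hSΓ hs) (D / 8) (by positivity)
          (by rw [hD]; exact ENNReal.ofReal_lt_ofReal_iff'.2 ⟨by linarith, hD0⟩)).2).trans ?_
        gcongr
        linarith
    _ ≤ ENNReal.ofReal (32 ^ N * C₁ * D ^ d) := by
        rw [Finset.sum_const, nsmul_eq_mul, ← ENNReal.ofReal_natCast,
          ← ENNReal.ofReal_mul (by positivity), mul_assoc]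
        gcongr

theorem IsADR.hausdorffMeasure_inter_ball_le (hΓ : IsADR d C₁ Γ) (hd : 0 ≤ d) (hC₁ : 0 ≤ C₁)
    (hpos : 0 < ediam Γ) {p : E} (hp : p ∈ Γ) {R : ℝ} (hR : 0 < R) :
    μH[d] (Γ ∩ ball p R) ≤ ENNReal.ofReal (32 ^ (finrank ℝ E : ℝ) * C₁ * R ^ d) := by
  have h32 : 1 ≤ (32 : ℝ) ^ (finrank ℝ E : ℝ) := Real.one_le_rpow (by norm_num) (by positivity)
  rcases lt_or_ge (ENNReal.ofReal R) (ediam Γ) with hlt | hge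
  · refine (hΓ p hp R hR hlt).2.trans (ENNReal.ofReal_le_ofReal ?_)
    nlinarith [(by positivity : 0 ≤ C₁ * R ^ d)]
  · have hfin : ediam Γ ≠ ⊤ := ne_top_of_le_ne_top ENNReal.ofReal_ne_top hge
    have hD0 : 0 < (ediam Γ).toReal := ENNReal.toReal_pos hpos.ne' hfin
    refine (measure_mono inter_subset_left).trans <|
      (hΓ.hausdorffMeasure_le_of_ediam_eq hd hC₁ hD0 (ENNReal.ofReal_toReal hfin).symm).trans ?_
    gcongr
    exact ENNReal.toReal_le_of_le_ofReal hR.le hge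

theorem IsADR.exists_finset_coe_eq_card_le (hΓ : IsADR d C₁ Γ) (hd : 0 ≤ d) (hC₁ : 1 ≤ C₁)
    {p : E} (hp : p ∈ Γ) {ρ R : ℝ} (hρ : 0 < ρ) (hρR : ρ ≤ R)
    (hdiam : ENNReal.ofReal ρ < ediam Γ) {S : Set E} (hS : S ⊆ Γ ∩ ball p (3 * R))
    (hsep : S.Pairwise fun x y => ρ ≤ dist x y) :
    ∃ F : Finset E, ↑F = S ∧
      (F.card : ℝ) ≤ 32 ^ (finrank ℝ E : ℝ) * C₁ ^ 2 * (8 * R / ρ) ^ d := by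
  have hC₀ : 0 < C₁ := by linarith
  have hR : 0 < R := hρ.trans_le hρR
  obtain ⟨F, hFS, hF⟩ := exists_finset_coe_eq_card_mul_le_of_measure_ball (μH[d].restrict Γ)
    (t := ρ / 2) (U := ball p (4 * R)) (a := C₁⁻¹ * (ρ / 2) ^ d)
    (b := 32 ^ (finrank ℝ E : ℝ) * C₁ * (4 * R) ^ d)
    (fun x hx y hy hxy => by linarith [hsep hx hy hxy]) (by positivity) (by positivity)
    (fun s hs => by
      refine ⟨?_, ball_subset_ball' (by linarith [(hS hs).2.out])⟩
      rw [Measure.restrict_apply measurableSet_ball, inter_comm]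
      exact (hΓ s (hS hs).1 (ρ / 2) (by positivity)
        ((ENNReal.ofReal_le_ofReal (by linarith)).trans_lt hdiam)).1)
    (by
      rw [Measure.restrict_apply measurableSet_ball, inter_comm]
      exact hΓ.hausdorffMeasure_inter_ball_le hd hC₀.le (pos_of_gt hdiam) hp (by linarith))
  refine ⟨F, hFS, ?_⟩
  rw [← le_div_iff₀ (by positivity)] at hF
  have h8 : (8 * R / ρ) ^ d = (4 * R) ^ d / (ρ / 2) ^ d := by
    rw [← Real.div_rpow (by linarith) (by positivity)]
    congr 1
    field_simp
    ring
  rw [h8]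
  refine hF.trans_eq ?_
  rw [div_eq_mul_inv, mul_inv, inv_inv]
  ring

theorem IsADR.exists_finset_card_le_subset_biUnion_ball (hΓ : IsADR d C₁ Γ) (hd : 0 ≤ d)
    (hC₁ : 1 ≤ C₁) {p : E} (hp : p ∈ Γ) {ρ R : ℝ} (hρ : 0 < ρ) (hρR : ρ ≤ R) :
    ∃ F : Finset E, (F.card : ℝ) ≤ 32 ^ (finrank ℝ E : ℝ) * C₁ ^ 2 * (8 * R / ρ) ^ d ∧
      {Y | infDist Y Γ ≤ ρ} ∩ ball p R ⊆ ⋃ s ∈ F, ball s (3 * ρ) := by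
  have hnear : ∀ Y ∈ {Y | infDist Y Γ ≤ ρ} ∩ ball p R, ∃ z ∈ Γ, dist Y z < 2 * ρ :=
    fun Y hY => (infDist_lt_iff ⟨p, hp⟩).1 (by linarith [hY.1.out])
  rcases le_or_gt (ediam Γ) (ENNReal.ofReal ρ) with hsmall | hlarge
  · refine ⟨{p}, ?_, fun Y hY => ?_⟩
    · have h8 : 1 ≤ 8 * R / ρ := by rw [le_div_iff₀ hρ]; linarith
      rw [Finset.card_singleton, Nat.cast_one]
      exact one_le_mul_of_one_le_of_one_le (one_le_mul_of_one_le_of_one_le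
        (Real.one_le_rpow (by norm_num) (by positivity)) (one_le_pow₀ hC₁))
        (Real.one_le_rpow h8 hd)
    · obtain ⟨z, hz, hYz⟩ := hnear Y hY
      have hzp := (edist_le_ediam_of_mem hz hp).trans hsmall
      rw [edist_dist, ENNReal.ofReal_le_ofReal_iff hρ.le] at hzp
      simp only [Finset.mem_singleton, iUnion_iUnion_eq_left, mem_ball]
      linarith [dist_triangle Y z p]
  obtain ⟨S, hS, hsep, hcov⟩ :=
    exists_pairwise_le_dist_forall_exists_dist_lt (Γ ∩ ball p (3 * R)) hρ
  obtain ⟨F, rfl, hF⟩ := hΓ.exists_finset_coe_eq_card_le hd hC₁ hp hρ hρR hlarge hS hsep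
  refine ⟨F, hF, fun Y hY => ?_⟩
  obtain ⟨z, hz, hYz⟩ := hnear Y hY
  obtain ⟨s, hs, hzs⟩ := hcov z ⟨hz, mem_ball.2 (by
    linarith [dist_triangle z Y p, dist_comm z Y, mem_ball.1 hY.2])⟩
  exact mem_biUnion hs (by rw [mem_ball]; linarith [dist_triangle Y z s])

variable (μ : Measure E) [μ.IsAddHaarMeasure]

theorem exists_measure_infDist_le_inter_ball_le (hd : 0 ≤ d) (hC₁ : 1 ≤ C₁) :
    ∃ K, 0 < K ∧ ∀ Γ : Set E, IsADR d C₁ Γ → ∀ p ∈ Γ, ∀ ρ R : ℝ, 0 < ρ → ρ ≤ R →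
      μ ({Y | infDist Y Γ ≤ ρ} ∩ ball p R) ≤
        ENNReal.ofReal (K * ρ ^ ((finrank ℝ E : ℝ) - d) * R ^ d) := by
  set N : ℝ := (finrank ℝ E : ℝ)
  set ω := μ.real (ball 0 1)
  have hω : 0 < ω := ENNReal.toReal_pos (measure_ball_pos μ 0 one_pos).ne' measure_ball_lt_top.ne
  refine ⟨ω * 96 ^ N * C₁ ^ 2 * 8 ^ d, by positivity, fun Γ hΓ p hp ρ R hρ hρR => ?_⟩
  obtain ⟨F, hcard, hcover⟩ := hΓ.exists_finset_card_le_subset_biUnion_ball hd hC₁ hp hρ hρR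
  calc μ ({Y | infDist Y Γ ≤ ρ} ∩ ball p R) ≤ ∑ s ∈ F, μ (ball s (3 * ρ)) :=
        (measure_mono hcover).trans (measure_biUnion_finset_le F _)
    _ = ENNReal.ofReal (F.card * (ω * (3 * ρ) ^ N)) := by
        simp_rw [addHaar_ball_eq_ofReal μ _ (by positivity : 0 < 3 * ρ)]
        rw [Finset.sum_const, nsmul_eq_mul, ← ENNReal.ofReal_natCast,
          ← ENNReal.ofReal_mul (by positivity)]
    _ ≤ ENNReal.ofReal (32 ^ N * C₁ ^ 2 * (8 * R / ρ) ^ d * (ω * (3 * ρ) ^ N)) := by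
        gcongr
    _ = ENNReal.ofReal (ω * 96 ^ N * C₁ ^ 2 * 8 ^ d * ρ ^ (N - d) * R ^ d) := by
        rw [Real.mul_rpow (by norm_num) hρ.le, Real.div_rpow (by linarith) hρ.le,
          Real.mul_rpow (by norm_num) (by linarith), Real.rpow_sub hρ,
          show (96 : ℝ) = 32 * 3 by norm_num, Real.mul_rpow (by norm_num) (by norm_num)]
        field_simp

theorem IsADR.measure_infDist_eq_zero_inter_ball (hΓ : IsADR d C₁ Γ) (hd : 0 ≤ d)
    (hdN : d < finrank ℝ E) (hC₁ : 1 ≤ C₁) {p : E} (hp : p ∈ Γ) {R : ℝ} (hR : 0 < R) :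
    μ ({Y | infDist Y Γ = 0} ∩ ball p R) = 0 := by
  obtain ⟨K, -, htube⟩ := exists_measure_infDist_le_inter_ball_le μ hd hC₁
  have hlim : Tendsto (fun ρ => ENNReal.ofReal (K * ρ ^ ((finrank ℝ E : ℝ) - d) * R ^ d))
      (𝓝[>] 0) (𝓝 0) := by
    simpa using (ENNReal.tendsto_ofReal (tendsto_mul_rpow_mul_nhds_zero (sub_pos.2 hdN) K
      (R ^ d))).mono_left nhdsWithin_le_nhds
  refine le_antisymm (ge_of_tendsto hlim ?_) bot_le
  filter_upwards [Ioc_mem_nhdsGT hR] with ρ hρ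
  refine (measure_mono (inter_subset_inter_left _ fun Y hY => ?_)).trans
    (htube Γ hΓ p hp ρ R hρ.1 hρ.2)
  exact (show infDist Y Γ = 0 from hY).trans_le hρ.1.le

theorem exists_setLIntegral_distWeight_ball_far (γ : ℝ) :
    ∃ C, 0 < C ∧ ∀ (Γ : Set E) (X : E) (r : ℝ), 0 < r → 2 * r < infDist X Γ →
      ENNReal.ofReal (C⁻¹ * r ^ (finrank ℝ E : ℝ) * infDist X Γ ^ (-γ)) ≤
          ∫⁻ Y in ball X r, distWeight Γ γ Y ∂μ ∧
        ∫⁻ Y in ball X r, distWeight Γ γ Y ∂μ ≤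
          ENNReal.ofReal (C * r ^ (finrank ℝ E : ℝ) * infDist X Γ ^ (-γ)) := by
  set N : ℝ := (finrank ℝ E : ℝ)
  set ω := μ.real (ball 0 1)
  have hω : 0 < ω := ENNReal.toReal_pos (measure_ball_pos μ 0 one_pos).ne' measure_ball_lt_top.ne
  refine ⟨2 ^ |γ| * max ω ω⁻¹, by positivity, fun Γ X r hr hfar => ?_⟩
  set δ := infDist X Γ
  have hδ : 0 < δ := by linarith
  have hball : μ (ball X r) = ENNReal.ofReal (ω * r ^ N) := addHaar_ball_eq_ofReal μ X hr
  have hpos : 0 ≤ r ^ N * δ ^ (-γ) := by positivity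
  constructor
  · have hC : (2 ^ |γ| * max ω ω⁻¹)⁻¹ ≤ (2 ^ |γ|)⁻¹ * ω := by
      rw [mul_inv]
      gcongr
      exact inv_le_of_inv_le₀ hω (le_max_right _ _)
    calc ENNReal.ofReal ((2 ^ |γ| * max ω ω⁻¹)⁻¹ * r ^ N * δ ^ (-γ))
        ≤ ENNReal.ofReal ((2 ^ |γ|)⁻¹ * δ ^ (-γ) * (ω * r ^ N)) :=
          ENNReal.ofReal_le_ofReal (by linarith [mul_le_mul_of_nonneg_right hC hpos])
      _ = ENNReal.ofReal ((2 ^ |γ|)⁻¹ * δ ^ (-γ)) * μ (ball X r) := by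
          rw [hball, ENNReal.ofReal_mul (by positivity)]
      _ ≤ ∫⁻ Y in ball X r, distWeight Γ γ Y ∂μ := le_setLIntegral_distWeight μ fun Y hY => by
          obtain ⟨h₁, h₂⟩ := infDist_comparable_of_mem_ball hfar hY
          have := rpow_le_rpow_abs_mul_rpow (-γ) (by linarith) hδ h₂ h₁
          rwa [abs_neg, ← inv_mul_le_iff₀ (by positivity)] at this
  · have hC : 2 ^ |γ| * ω ≤ 2 ^ |γ| * max ω ω⁻¹ := by gcongr; exact le_max_left _ _
    calc ∫⁻ Y in ball X r, distWeight Γ γ Y ∂μ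
        ≤ ENNReal.ofReal (2 ^ |γ| * δ ^ (-γ)) * μ (ball X r) :=
          setLIntegral_distWeight_le μ fun Y hY => by
            obtain ⟨h₁, h₂⟩ := infDist_comparable_of_mem_ball hfar hY
            simpa [abs_neg] using rpow_le_rpow_abs_mul_rpow (-γ) hδ (by linarith) h₁ h₂
      _ = ENNReal.ofReal (2 ^ |γ| * δ ^ (-γ) * (ω * r ^ N)) := by
          rw [hball, ← ENNReal.ofReal_mul (by positivity)]
      _ ≤ ENNReal.ofReal (2 ^ |γ| * max ω ω⁻¹ * r ^ N * δ ^ (-γ)) :=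
          ENNReal.ofReal_le_ofReal (by linarith [mul_le_mul_of_nonneg_right hC hpos])

theorem exists_setLIntegral_distWeight_ball_le (hd : 0 ≤ d) (hdN : d < finrank ℝ E)
    (hC₁ : 1 ≤ C₁) (hγ : γ < finrank ℝ E - d) :
    ∃ C, ∀ Γ : Set E, IsADR d C₁ Γ → ∀ p ∈ Γ, ∀ R : ℝ, 0 < R →
      ∫⁻ Y in ball p R, distWeight Γ γ Y ∂μ ≤
        ENNReal.ofReal (C * R ^ ((finrank ℝ E : ℝ) - γ)) := by
  set N : ℝ := (finrank ℝ E : ℝ)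
  obtain ⟨K, hK, htube⟩ := exists_measure_infDist_le_inter_ball_le μ hd hC₁
  set θ : ℝ := (1 / 2) ^ (N - d - γ)
  have hθ0 : 0 ≤ θ := by positivity
  have hθ1 : θ < 1 := Real.rpow_lt_one (by norm_num) (by norm_num) (by linarith)
  refine ⟨2 ^ |γ| * K * (1 - θ)⁻¹, fun Γ hΓ p hp R hR => ?_⟩
  set A : ℕ → Set E := fun k =>
    {Y | (1 / 2) ^ k * R / 2 < infDist Y Γ ∧ infDist Y Γ ≤ (1 / 2) ^ k * R} ∩ ball p R
  have hA : ∀ k, ∫⁻ Y in A k, distWeight Γ γ Y ∂μ ≤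
      ENNReal.ofReal (2 ^ |γ| * K * R ^ d * R ^ (N - d - γ) * θ ^ k) := fun k => by
    have hρ : 0 < (1 / 2 : ℝ) ^ k * R := by positivity
    refine (setLIntegral_distWeight_annulus_le μ hρ (htube Γ hΓ p hp _ R hρ
      (mul_le_of_le_one_left hR.le (pow_le_one₀ (by norm_num) (by norm_num))))).trans_eq ?_
    rw [Real.mul_rpow (by positivity) hR.le, ← Real.rpow_pow_comm (by norm_num)]
    simp only [θ, N]
    ring_nf
  -- the weight has the junk value `0 ^ (-γ)` on this set, which is null
  have hnull := hΓ.measure_infDist_eq_zero_inter_ball μ hd hdN hC₁ hp hR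
  calc ∫⁻ Y in ball p R, distWeight Γ γ Y ∂μ
      ≤ ∫⁻ Y in {Y | infDist Y Γ = 0} ∩ ball p R, distWeight Γ γ Y ∂μ +
          ∑' k, ∫⁻ Y in A k, distWeight Γ γ Y ∂μ :=
        (lintegral_mono_set (ball_subset_infDist_eq_zero_union_iUnion_annulus hp hR)).trans <|
          (lintegral_union_le _ _ _).trans (add_le_add le_rfl (lintegral_iUnion_le _ _))
    _ ≤ ∑' k, ENNReal.ofReal (2 ^ |γ| * K * R ^ d * R ^ (N - d - γ) * θ ^ k) := by
        rw [setLIntegral_measure_zero _ _ hnull, zero_add]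
        exact ENNReal.tsum_le_tsum hA
    _ = ENNReal.ofReal (2 ^ |γ| * K * (1 - θ)⁻¹ * R ^ (N - γ)) := by
        rw [← ENNReal.ofReal_tsum_of_nonneg (fun k => by positivity)
          ((summable_geometric_of_lt_one hθ0 hθ1).mul_left _), tsum_mul_left,
          tsum_geometric_of_lt_one hθ0 hθ1, mul_assoc (2 ^ |γ| * K), ← Real.rpow_add hR]
        ring_nf

theorem exists_ofReal_le_measure_ball_sdiff (hd : 0 ≤ d) (hdN : d < finrank ℝ E)
    (hC₁ : 1 ≤ C₁) :
    ∃ ε, 0 < ε ∧ ε < 10⁻¹ ∧ ∀ Γ : Set E, IsADR d C₁ Γ → ∀ p ∈ Γ, ∀ (X : E) (r : ℝ),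
      0 < r → dist X p < 9 * r →
        ENNReal.ofReal (μ.real (ball 0 1) * r ^ (finrank ℝ E : ℝ) / 2) ≤
          μ (ball X r \ {Y | infDist Y Γ ≤ ε * r}) := by
  set N : ℝ := (finrank ℝ E : ℝ)
  set ω := μ.real (ball 0 1)
  have hω : 0 < ω := ENNReal.toReal_pos (measure_ball_pos μ 0 one_pos).ne' measure_ball_lt_top.ne
  obtain ⟨K, -, htube⟩ := exists_measure_infDist_le_inter_ball_le μ hd hC₁
  have hsmall : ∀ᶠ ε in 𝓝[>] (0 : ℝ), (K * ε ^ (N - d) * 10 ^ d < ω / 2 ∧ ε < 10⁻¹) ∧ 0 < ε :=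
    ((((tendsto_mul_rpow_mul_nhds_zero (sub_pos.2 hdN) K (10 ^ d)).eventually
      (gt_mem_nhds (half_pos hω))).and (gt_mem_nhds (by norm_num))).filter_mono
        nhdsWithin_le_nhds).and self_mem_nhdsWithin
  obtain ⟨ε, ⟨hεK, hε10⟩, hε0⟩ := hsmall.exists
  refine ⟨ε, hε0, hε10, fun Γ hΓ p hp X r hr hXp => ?_⟩
  set T := {Y | infDist Y Γ ≤ ε * r}
  have hT : μ (ball X r ∩ T) ≤ ENNReal.ofReal (ω * r ^ N / 2) := by
    have hsub : ball X r ∩ T ⊆ T ∩ ball p (10 * r) :=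
      fun Y hY => ⟨hY.2, ball_subset_ball' (by linarith) hY.1⟩
    refine (measure_mono hsub).trans <| (htube Γ hΓ p hp (ε * r) (10 * r) (by positivity)
      (by nlinarith)).trans (ENNReal.ofReal_le_ofReal ?_)
    have hrN : r ^ (N - d) * r ^ d = r ^ N := by rw [← Real.rpow_add hr]; ring_nf
    calc K * (ε * r) ^ (N - d) * (10 * r) ^ d
        = (K * ε ^ (N - d) * 10 ^ d) * r ^ N := by
          rw [Real.mul_rpow hε0.le hr.le, Real.mul_rpow (by norm_num) hr.le, ← hrN]; ring
      _ ≤ ω / 2 * r ^ N := by gcongr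
      _ = ω * r ^ N / 2 := by ring
  refine (ENNReal.add_le_add_iff_left (ENNReal.ofReal_ne_top (r := ω * r ^ N / 2))).1 ?_
  calc ENNReal.ofReal (ω * r ^ N / 2) + ENNReal.ofReal (ω * r ^ N / 2)
      = μ (ball X r) := by
        have hball : μ (ball X r) = ENNReal.ofReal (ω * r ^ N) := addHaar_ball_eq_ofReal μ X hr
        rw [hball, ← ENNReal.ofReal_add (by positivity) (by positivity)]
        ring_nf
    _ ≤ μ (ball X r ∩ T) + μ (ball X r \ T) := measure_le_inter_add_sdiff μ _ _
    _ ≤ ENNReal.ofReal (ω * r ^ N / 2) + μ (ball X r \ T) := by gcongr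

theorem exists_le_setLIntegral_distWeight_ball (hd : 0 ≤ d) (hdN : d < finrank ℝ E)
    (hC₁ : 1 ≤ C₁) (γ : ℝ) :
    ∃ c, 0 < c ∧ ∀ Γ : Set E, IsADR d C₁ Γ → ∀ p ∈ Γ, ∀ (X : E) (r : ℝ), 0 < r →
      dist X p < 9 * r →
        ENNReal.ofReal (c * r ^ ((finrank ℝ E : ℝ) - γ)) ≤
          ∫⁻ Y in ball X r, distWeight Γ γ Y ∂μ := by
  set N : ℝ := (finrank ℝ E : ℝ)
  set ω := μ.real (ball 0 1)
  have hω : 0 < ω := ENNReal.toReal_pos (measure_ball_pos μ 0 one_pos).ne' measure_ball_lt_top.ne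
  obtain ⟨ε, hε0, hε10, hhalf⟩ := exists_ofReal_le_measure_ball_sdiff μ hd hdN hC₁
  refine ⟨ε ^ |γ| * (ω / 2), by positivity, fun Γ hΓ p hp X r hr hXp => ?_⟩
  have hweight : ∀ Y ∈ ball X r \ {Y | infDist Y Γ ≤ ε * r},
      ε ^ |γ| * r ^ (-γ) ≤ infDist Y Γ ^ (-γ) := by
    rintro Y ⟨hYX, hYT⟩
    have hεr : ε * r < infDist Y Γ := not_le.1 hYT
    have hY10 : infDist Y Γ < 10 * r := (infDist_le_dist_of_mem hp).trans_lt
      (by linarith [dist_triangle Y X p, mem_ball.1 hYX])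
    have h := rpow_le_rpow_abs_mul_rpow (-γ) (K := ε⁻¹) (a := infDist Y Γ) (t := r)
      (by nlinarith) hr (by rw [inv_mul_eq_div, le_div_iff₀ hε0]; nlinarith)
      (by rw [inv_mul_eq_div, le_div_iff₀ hε0]; nlinarith)
    rwa [abs_neg, Real.inv_rpow hε0.le, inv_mul_eq_div, le_div_iff₀ (by positivity),
      mul_comm] at h
  calc ENNReal.ofReal (ε ^ |γ| * (ω / 2) * r ^ (N - γ))
      = ENNReal.ofReal (ε ^ |γ| * r ^ (-γ)) * ENNReal.ofReal (ω * r ^ N / 2) := by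
        rw [← ENNReal.ofReal_mul (by positivity), sub_eq_add_neg, Real.rpow_add hr]
        ring_nf
    _ ≤ ENNReal.ofReal (ε ^ |γ| * r ^ (-γ)) * μ (ball X r \ {Y | infDist Y Γ ≤ ε * r}) := by
        gcongr
        exact hhalf Γ hΓ p hp X r hr hXp
    _ ≤ ∫⁻ Y in ball X r \ {Y | infDist Y Γ ≤ ε * r}, distWeight Γ γ Y ∂μ :=
        le_setLIntegral_distWeight μ hweight
    _ ≤ ∫⁻ Y in ball X r, distWeight Γ γ Y ∂μ := lintegral_mono_set sdiff_subset

theorem exists_setLIntegral_distWeight_ball_two_mul_le (hd : 0 ≤ d) (hdN : d < finrank ℝ E)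
    (hC₁ : 1 ≤ C₁) (hγ : γ < finrank ℝ E - d) :
    ∃ C, ∀ Γ : Set E, IsADR d C₁ Γ → Γ.Nonempty → ∀ (X : E) (r : ℝ), 0 < r →
      ∫⁻ Y in ball X (2 * r), distWeight Γ γ Y ∂μ ≤
        ENNReal.ofReal C * ∫⁻ Y in ball X r, distWeight Γ γ Y ∂μ := by
  set N : ℝ := (finrank ℝ E : ℝ)
  obtain ⟨C₀, hC₀, hfar⟩ := exists_setLIntegral_distWeight_ball_far μ γ
  obtain ⟨Cu, hup⟩ := exists_setLIntegral_distWeight_ball_le μ hd hdN hC₁ hγ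
  obtain ⟨cl, hcl, hlow⟩ := exists_le_setLIntegral_distWeight_ball μ hd hdN hC₁ γ
  have hfar_le : C₀ ^ 2 * 2 ^ N ≤ max (C₀ ^ 2 * 2 ^ N) (Cu * 11 ^ (N - γ) / cl) := le_max_left _ _
  have hnear_le : Cu * 11 ^ (N - γ) / cl ≤ max (C₀ ^ 2 * 2 ^ N) (Cu * 11 ^ (N - γ) / cl) :=
    le_max_right _ _
  refine ⟨max (C₀ ^ 2 * 2 ^ N) (Cu * 11 ^ (N - γ) / cl), fun Γ hΓ hne X r hr => ?_⟩
  have hC : 0 ≤ max (C₀ ^ 2 * 2 ^ N) (Cu * 11 ^ (N - γ) / cl) :=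
    le_trans (by positivity) hfar_le
  rcases lt_or_ge (8 * r) (infDist X Γ) with hfar' | hnear
  · refine le_ofReal_mul_of_le_of_le hC (hfar Γ X (2 * r) (by positivity) (by linarith)).2
      (hfar Γ X r hr (by linarith)).1 ?_
    have hpos : 0 ≤ C₀⁻¹ * r ^ N * infDist X Γ ^ (-γ) :=
      mul_nonneg (by positivity) (Real.rpow_nonneg infDist_nonneg _)
    calc C₀ * (2 * r) ^ N * infDist X Γ ^ (-γ)
        = C₀ ^ 2 * 2 ^ N * (C₀⁻¹ * r ^ N * infDist X Γ ^ (-γ)) := by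
          rw [Real.mul_rpow (by norm_num) hr.le]; field_simp
      _ ≤ _ := by gcongr
  · obtain ⟨p, hp, hXp⟩ := (infDist_lt_iff hne).1 (by linarith : infDist X Γ < 9 * r)
    refine le_ofReal_mul_of_le_of_le hC ((lintegral_mono_set (ball_subset_ball' ?_)).trans
      (hup Γ hΓ p hp (11 * r) (by positivity))) (hlow Γ hΓ p hp X r hr hXp) ?_
    · linarith
    calc Cu * (11 * r) ^ (N - γ)
        = Cu * 11 ^ (N - γ) / cl * (cl * r ^ (N - γ)) := by
          rw [Real.mul_rpow (by norm_num) hr.le]; field_simp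
      _ ≤ _ := by gcongr

end FiniteDimensional

theorem statement10_general (n : ℕ) (d : ℝ) (hd0 : 0 < d) (hdn : d < n)
    (γ : ℝ) (hγ2 : γ < (n : ℝ) - d + 1)
    (C₁ : ℝ) (hC₁ : 1 ≤ C₁) :
    ∃ C : ℝ, 1 ≤ C ∧
      ∀ Γ : Set (EuclideanSpace ℝ (Fin (n + 1))), IsClosed Γ → Γ.Nonempty →
        -- Γ is d-ADR with constant C₁
        (∀ x ∈ Γ, ∀ r : ℝ, 0 < r → ENNReal.ofReal r < EMetric.diam Γ →
          ENNReal.ofReal (C₁⁻¹ * r ^ d) ≤ μH[d] (Γ ∩ ball x r) ∧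
            μH[d] (Γ ∩ ball x r) ≤ ENNReal.ofReal (C₁ * r ^ d)) →
        -- (i) m(B(X,r)) ≃ r^{n+1} dist(X,Γ)^{-γ} when 2r < dist(X,Γ)
        (∀ (X : EuclideanSpace ℝ (Fin (n + 1))) (r : ℝ), 0 < r →
          2 * r < Metric.infDist X Γ →
          ENNReal.ofReal (C⁻¹ * r ^ ((n : ℝ) + 1) * Metric.infDist X Γ ^ (-γ)) ≤
              distWeightMeasure Γ γ (ball X r) ∧
            distWeightMeasure Γ γ (ball X r) ≤
              ENNReal.ofReal (C * r ^ ((n : ℝ) + 1) * Metric.infDist X Γ ^ (-γ))) ∧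
        -- (ii) m is doubling on ℝ^{n+1}
        (∀ (X : EuclideanSpace ℝ (Fin (n + 1))) (r : ℝ), 0 < r →
          distWeightMeasure Γ γ (ball X (2 * r)) ≤
            ENNReal.ofReal C * distWeightMeasure Γ γ (ball X r)) := by
  let μ : Measure (EuclideanSpace ℝ (Fin (n + 1))) := volume
  have hN : (finrank ℝ (EuclideanSpace ℝ (Fin (n + 1))) : ℝ) = n + 1 := by simp
  obtain ⟨C₂, hC₂, hfar⟩ := exists_setLIntegral_distWeight_ball_far μ γ
  obtain ⟨C₃, hdouble⟩ := exists_setLIntegral_distWeight_ball_two_mul_le μ (γ := γ) hd0.le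
    (by rw [hN]; linarith) hC₁ (by rw [hN]; linarith)
  rw [hN] at hfar
  have hC₂le : C₂ ≤ max 1 (max C₂ C₃) := le_max_of_le_right (le_max_left _ _)
  have hC₃le : C₃ ≤ max 1 (max C₂ C₃) := le_max_of_le_right (le_max_right _ _)
  refine ⟨max 1 (max C₂ C₃), le_max_left _ _, fun Γ _ hne hΓ => ⟨fun X r hr h2r => ?_,
    fun X r hr => (hdouble Γ hΓ hne X r hr).trans
      (mul_le_mul_of_nonneg_right (ENNReal.ofReal_le_ofReal hC₃le) zero_le)⟩⟩
  obtain ⟨hlow, hup⟩ := hfar Γ X r hr h2r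
  have hpos : 0 ≤ r ^ ((n : ℝ) + 1) * infDist X Γ ^ (-γ) :=
    mul_nonneg (by positivity) (Real.rpow_nonneg infDist_nonneg _)
  refine ⟨le_trans (ENNReal.ofReal_le_ofReal ?_) hlow, hup.trans (ENNReal.ofReal_le_ofReal ?_)⟩
  · rw [mul_assoc, mul_assoc]
    exact mul_le_mul_of_nonneg_right (inv_anti₀ hC₂ hC₂le) hpos
  · rw [mul_assoc, mul_assoc]
    exact mul_le_mul_of_nonneg_right hC₂le hpos

/-- for a `d`-ADR set `Γ ⊆ ℝ^{n+1}` (`0 < d < n`) and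
`γ ∈ (n-d-1, n-d+1)`, the measure `m = dist(·,Γ)^{-γ} dY` satisfies
`m(B(X,r)) ≃ r^{n+1} dist(X,Γ)^{-γ}` when `2r < dist(X,Γ)`, and `m` is doubling
on `ℝ^{n+1}`, with constants depending only on `n`, `d`, `γ` and the ADR
constant `C₁`. -/
theorem statement10 (n : ℕ) (hn : 1 ≤ n) (d : ℝ) (hd0 : 0 < d) (hdn : d < n)
    (γ : ℝ) (hγ1 : (n : ℝ) - d - 1 < γ) (hγ2 : γ < (n : ℝ) - d + 1)
    (C₁ : ℝ) (hC₁ : 1 ≤ C₁) :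
    ∃ C : ℝ, 1 ≤ C ∧
      ∀ Γ : Set (EuclideanSpace ℝ (Fin (n + 1))), IsClosed Γ → Γ.Nonempty →
        -- Γ is d-ADR with constant C₁
        (∀ x ∈ Γ, ∀ r : ℝ, 0 < r → ENNReal.ofReal r < EMetric.diam Γ →
          ENNReal.ofReal (C₁⁻¹ * r ^ d) ≤ μH[d] (Γ ∩ ball x r) ∧
            μH[d] (Γ ∩ ball x r) ≤ ENNReal.ofReal (C₁ * r ^ d)) →
        -- (i) m(B(X,r)) ≃ r^{n+1} dist(X,Γ)^{-γ} when 2r < dist(X,Γ)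
        (∀ (X : EuclideanSpace ℝ (Fin (n + 1))) (r : ℝ), 0 < r →
          2 * r < Metric.infDist X Γ →
          ENNReal.ofReal (C⁻¹ * r ^ ((n : ℝ) + 1) * Metric.infDist X Γ ^ (-γ)) ≤
              distWeightMeasure Γ γ (ball X r) ∧
            distWeightMeasure Γ γ (ball X r) ≤
              ENNReal.ofReal (C * r ^ ((n : ℝ) + 1) * Metric.infDist X Γ ^ (-γ))) ∧
        -- (ii) m is doubling on ℝ^{n+1}
        (∀ (X : EuclideanSpace ℝ (Fin (n + 1))) (r : ℝ), 0 < r →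
          distWeightMeasure Γ γ (ball X (2 * r)) ≤
            ENNReal.ofReal C * distWeightMeasure Γ γ (ball X r)) :=
  statement10_general n d hd0 hdn γ hγ2 C₁ hC₁
end
end

section
/- Let n ≥ 1, 0 < d < n, let Γ ⊂ ℝ^{n+1} be a nonempty closed d-ADR set with constant C₁ ≥ 1, let γ ∈ (n−d−1, n−d+1), let μ := 𝓗^d restricted to Γ, and let m(A) := ∫_A dist(Y, Γ)^{−γ} dY. Define ρ(x,r) := m(B(x,r)) / ( r · μ(Γ ∩ B(x,r)) ) for x ∈ Γ and r > 0. Then there exists C ≥ 1, depending only on n, d, γ and C₁, such that C^{-1} r^{n−d−γ} ≤ ρ(x,r) ≤ C r^{n−d−γ} for all x ∈ Γ and 0 < r < diam(Γ). In particular, setting ε := 1 + d + γ − n > 0, one has ρ(x,r)/ρ(x,s) ≤ C² (r/s)^{1−ε} for all x ∈ Γ and 0 < s ≤ r < diam(Γ). -/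
open Metric MeasureTheory Set
open scoped ENNReal

noncomputable section

/-- The ratio `ρ(x,r) = m(B(x,r)) / (r μ(Γ ∩ B(x,r)))`, where `μ = 𝓗^d|_Γ`. -/
def rhoRatio {n : ℕ} (Γ : Set (EuclideanSpace ℝ (Fin (n + 1)))) (d γ : ℝ)
    (x : EuclideanSpace ℝ (Fin (n + 1))) (r : ℝ) : ℝ≥0∞ :=
  distWeightMeasure Γ γ (ball x r) / (ENNReal.ofReal r * μH[d] (Γ ∩ ball x r))

/-!
Write `N = n + 1` for the ambient dimension. Upper regularity below the scale `diam Γ` extends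
to all scales, since a set of diameter `D` is covered by boundedly many balls of radius `D / 4`.
A Vitali family of disjoint balls `B(b, t)`, `b ∈ Γ ∩ B(x, 2r)`, has at most `≲ (r / t)^d`
members by the two-sided regularity of `μ`, and the enlarged balls `B(b, 6t)` cover the
`t`-neighbourhood of `Γ` in `B(x, r)`, whose volume is therefore `≲ t^(N - d) r^d`.
As `d < N`, a fixed proportion of `B(x, r)` lies at distance `≳ r` from `Γ`, so
`m(B(x, r)) ≳ r^(N - γ)`; as `γ < N - d`, the dyadic layers
`{2^(-k-1) r ≤ dist(·, Γ) < 2^(-k) r}` contribute a convergent geometric series, so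
`m(B(x, r)) ≲ r^(N - γ)`. Dividing by `r μ(Γ ∩ B(x, r)) ≈ r^(d + 1)` gives
`ρ(x, r) ≈ r^(n - d - γ)`.
-/

open Module

section Regularity

variable {X : Type*} [PseudoMetricSpace X] [MeasurableSpace X]

def IsUpperAhlforsRegular (μ : Measure X) (Γ : Set X) (d C : ℝ) : Prop :=
  ∀ x ∈ Γ, ∀ r : ℝ, 0 < r → ENNReal.ofReal r < ediam Γ →
    μ (Γ ∩ ball x r) ≤ ENNReal.ofReal (C * r ^ d)

def IsLowerAhlforsRegular (μ : Measure X) (Γ : Set X) (d C : ℝ) : Prop :=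
  ∀ x ∈ Γ, ∀ r : ℝ, 0 < r → ENNReal.ofReal r < ediam Γ →
    ENNReal.ofReal (C⁻¹ * r ^ d) ≤ μ (Γ ∩ ball x r)

end Regularity

theorem exists_finset_ball_cover_closedBall (E : Type*) [NormedAddCommGroup E]
    [NormedSpace ℝ E] [ProperSpace E] :
    ∃ F : Finset E, ∀ (x : E) {D : ℝ}, 0 < D →
      closedBall x D ⊆ ⋃ p ∈ F, ball (x + D • p) (D / 4) := by
  obtain ⟨F, hF⟩ := (isCompact_closedBall (0 : E) 1).elim_finite_subcover (fun p => ball p 4⁻¹)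
    (fun _ => isOpen_ball) fun y _ => mem_iUnion.2 ⟨y, mem_ball_self (by norm_num)⟩
  refine ⟨F, fun x D hD y hy => ?_⟩
  have hv : D⁻¹ • (y - x) ∈ closedBall (0 : E) 1 := by
    rw [mem_closedBall, dist_zero_right, norm_smul, Real.norm_of_nonneg (inv_nonneg.2 hD.le),
      ← dist_eq_norm]
    exact inv_mul_le_one_of_le₀ (mem_closedBall.1 hy) hD.le
  obtain ⟨p, hpF, hp⟩ := mem_iUnion₂.1 (hF hv)
  refine mem_iUnion₂.2 ⟨p, hpF, ?_⟩
  have hyp : y - (x + D • p) = D • (D⁻¹ • (y - x) - p) := by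
    rw [smul_sub, smul_inv_smul₀ hD.ne']
    abel
  rw [mem_ball, dist_eq_norm, hyp, norm_smul, Real.norm_of_nonneg hD.le, ← dist_eq_norm]
  linarith [mul_lt_mul_of_pos_left (mem_ball.1 hp) hD]

theorem exists_measure_inter_ball_le_of_isUpperAhlforsRegular (E : Type*) [NormedAddCommGroup E]
    [NormedSpace ℝ E] [ProperSpace E] [MeasurableSpace E] :
    ∃ K : ℝ, 0 < K ∧ ∀ (μ : Measure E) (Γ : Set E) {d C : ℝ}, 0 ≤ d → 0 ≤ C →
      IsUpperAhlforsRegular μ Γ d C → Γ.Nontrivial →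
        ∀ x ∈ Γ, ∀ R : ℝ, 0 < R → μ (Γ ∩ ball x R) ≤ ENNReal.ofReal (K * C * R ^ d) := by
  obtain ⟨F, hF⟩ := exists_finset_ball_cover_closedBall E
  refine ⟨F.card + 1, by positivity, fun μ Γ d C hd hC hΓ hnt x hx R hR => ?_⟩
  have hCR : C * R ^ d ≤ (F.card + 1) * C * R ^ d := by
    rw [mul_assoc]
    exact le_mul_of_one_le_left (by positivity) (by linarith [F.card.cast_nonneg (α := ℝ)])
  by_cases hRD : ENNReal.ofReal R < ediam Γ
  · exact (hΓ x hx R hR hRD).trans (ENNReal.ofReal_le_ofReal hCR)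
  push Not at hRD
  have hfin : ediam Γ ≠ ⊤ := ne_top_of_le_ne_top ENNReal.ofReal_ne_top hRD
  set D := diam Γ
  have hD : 0 < D := ENNReal.toReal_pos (ediam_pos_iff.2 hnt).ne' hfin
  have hDR : D ≤ R := (ENNReal.toReal_le_of_le_ofReal hR.le hRD)
  have hpiece : ∀ c : E, μ (Γ ∩ ball c (D / 4)) ≤ ENNReal.ofReal (C * R ^ d) := by
    intro c
    rcases (Γ ∩ ball c (D / 4)).eq_empty_or_nonempty with he | ⟨z, hzΓ, hzc⟩
    · simp [he]
    have hsub : Γ ∩ ball c (D / 4) ⊆ Γ ∩ ball z (D / 2) := fun w ⟨hwΓ, hwc⟩ =>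
      ⟨hwΓ, by rw [mem_ball] at *; linarith [dist_triangle_right w z c]⟩
    have hDdiam : ENNReal.ofReal (D / 2) < ediam Γ := by
      rw [← ENNReal.ofReal_toReal hfin]
      exact ENNReal.ofReal_lt_ofReal_iff'.2 ⟨half_lt_self hD, hD⟩
    refine (measure_mono hsub).trans ((hΓ z hzΓ _ (by positivity) hDdiam).trans ?_)
    gcongr
    linarith
  have hcover : Γ ∩ ball x R ⊆ ⋃ p ∈ F, Γ ∩ ball (x + D • p) (D / 4) := fun y hy => by
    obtain ⟨p, hpF, hp⟩ := mem_iUnion₂.1 (hF x hD (dist_le_diam_of_mem' hfin hy.1 hx))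
    exact mem_iUnion₂.2 ⟨p, hpF, hy.1, hp⟩
  calc μ (Γ ∩ ball x R) ≤ ∑ p ∈ F, μ (Γ ∩ ball (x + D • p) (D / 4)) :=
        (measure_mono hcover).trans (measure_biUnion_finset_le F _)
    _ ≤ F.card * ENNReal.ofReal (C * R ^ d) := by
        simpa using Finset.sum_le_sum fun p _ => hpiece (x + D • p)
    _ ≤ ENNReal.ofReal ((F.card + 1) * C * R ^ d) := by
        rw [← ENNReal.ofReal_natCast, ← ENNReal.ofReal_mul (by positivity), mul_assoc]
        gcongr
        linarith

theorem encard_mul_le_measure_inter_biUnion_ball {X : Type*} [PseudoMetricSpace X]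
    [MeasurableSpace X] [OpensMeasurableSpace X] (μ : Measure X) {Γ T : Set X} {t : ℝ}
    {c : ℝ≥0∞} (hTc : T.Countable) (hT : T.PairwiseDisjoint fun b => ball b t)
    (hc : ∀ b ∈ T, c ≤ μ (Γ ∩ ball b t)) :
    T.encard * c ≤ μ (Γ ∩ ⋃ b ∈ T, ball b t) :=
  calc T.encard * c = ∑' _ : T, c := (ENNReal.tsum_set_const T c).symm
    _ ≤ ∑' b : T, μ.restrict Γ (ball b t) := ENNReal.tsum_le_tsum fun b => by
        rw [Measure.restrict_apply measurableSet_ball, inter_comm]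
        exact hc b b.2
    _ = μ.restrict Γ (⋃ b ∈ T, ball b t) :=
        (measure_biUnion hTc hT fun _ _ => measurableSet_ball).symm
    _ = μ (Γ ∩ ⋃ b ∈ T, ball b t) := by
        rw [Measure.restrict_apply (MeasurableSet.biUnion hTc fun _ _ => measurableSet_ball),
          inter_comm]

theorem exists_pairwiseDisjoint_ball_cover_inter_thickening {X : Type*} [PseudoMetricSpace X]
    {Γ : Set X} {x : X} {r t : ℝ} (hx : x ∈ Γ) (ht : 0 < t) (htr : t ≤ r) :
    ∃ T ⊆ Γ ∩ closedBall x (2 * r), (T.PairwiseDisjoint fun b => ball b t) ∧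
      ball x r ∩ {Y | infDist Y Γ < t} ⊆ ⋃ b ∈ T, ball b (6 * t) := by
  obtain ⟨T, hTsub, hTdisj, hTcov⟩ :=
    Vitali.exists_disjoint_subfamily_covering_enlargement_closedBall
      (Γ ∩ closedBall x (2 * r)) id (fun _ => t) t (fun _ _ => le_rfl) 4 (by norm_num)
  refine ⟨T, hTsub, hTdisj.mono fun _ => ball_subset_closedBall, ?_⟩
  rintro Y ⟨hYx, hYΓ⟩
  obtain ⟨p, hpΓ, hYp⟩ := (infDist_lt_iff ⟨x, hx⟩).1 hYΓ
  have hpx : p ∈ closedBall x (2 * r) := by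
    rw [mem_closedBall]
    linarith [dist_triangle_left p x Y, mem_ball.1 hYx]
  obtain ⟨b, hbT, hpb⟩ := hTcov p ⟨hpΓ, hpx⟩
  have hpb' : dist p b ≤ 4 * t := mem_closedBall.1 (hpb (mem_closedBall_self ht.le))
  exact mem_iUnion₂.2 ⟨b, hbT, mem_ball.2 (by linarith [dist_triangle Y p b])⟩

theorem exists_pos_le_one_mul_rpow_le {A β ε : ℝ} (hA : 0 < A) (hβ : 0 < β) (hε : 0 < ε) :
    ∃ s : ℝ, 0 < s ∧ s ≤ 1 ∧ A * s ^ β ≤ ε := by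
  refine ⟨min 1 ((ε / A) ^ β⁻¹), by positivity, min_le_left _ _, ?_⟩
  calc A * min 1 ((ε / A) ^ β⁻¹) ^ β ≤ A * ((ε / A) ^ β⁻¹) ^ β := by
        gcongr
        exact min_le_right _ _
    _ = ε := by
        rw [← Real.rpow_mul (by positivity), inv_mul_cancel₀ hβ.ne', Real.rpow_one]
        field_simp

theorem div_two_pow_rpow {r : ℝ} (hr : 0 ≤ r) (k : ℕ) (p : ℝ) :
    (r / 2 ^ k) ^ p = r ^ p * (2 ^ (-p)) ^ k := by
  rw [Real.div_rpow hr (by positivity), ← Real.rpow_natCast 2 k, ← Real.rpow_natCast _ k,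
    ← Real.rpow_mul zero_le_two, ← Real.rpow_mul zero_le_two, neg_mul, Real.rpow_neg zero_le_two,
    mul_comm p, div_eq_mul_inv]

theorem rpow_neg_div_two_pow_succ_mul_rpow_div_two_pow {r : ℝ} (hr : 0 < r) (k : ℕ) (a γ : ℝ) :
    (r / 2 ^ (k + 1)) ^ (-γ) * (r / 2 ^ k) ^ a = 2 ^ γ * r ^ (a - γ) * (2 ^ (γ - a)) ^ k := by
  rw [div_two_pow_rpow hr.le, div_two_pow_rpow hr.le, neg_neg, sub_eq_add_neg γ,
    Real.rpow_add two_pos, Real.rpow_sub hr, Real.rpow_neg hr.le]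
  field_simp
  ring

theorem subset_zero_union_iUnion_dyadic {α : Type*} {f : α → ℝ} {S : Set α} {r : ℝ}
    (hfS : ∀ y ∈ S, 0 ≤ f y ∧ f y < r) :
    S ⊆ (S ∩ {y | f y = 0}) ∪
      ⋃ k : ℕ, S ∩ {y | r / 2 ^ (k + 1) ≤ f y ∧ f y < r / 2 ^ k} := by
  intro y hy
  rcases (hfS y hy).1.eq_or_lt with h0 | hpos
  · exact Or.inl ⟨hy, h0.symm⟩
  have hr : 0 < r := hpos.trans (hfS y hy).2
  have hex : ∃ k : ℕ, r / 2 ^ (k + 1) ≤ f y := by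
    obtain ⟨k, hk⟩ := exists_nat_gt (r / f y)
    have hk2 : (k : ℝ) < 2 ^ (k + 1) := by
      exact_mod_cast Nat.lt_two_pow_self.trans (Nat.pow_lt_pow_right one_lt_two k.lt_succ_self)
    rw [div_lt_iff₀ hpos] at hk
    refine ⟨k, (div_le_iff₀ (by positivity)).2 ?_⟩
    nlinarith
  refine Or.inr (mem_iUnion.2 ⟨Nat.find hex, hy, Nat.find_spec hex, ?_⟩)
  rcases hK : Nat.find hex with _ | j
  · simpa using (hfS y hy).2
  · exact lt_of_not_ge (Nat.find_min hex (by omega : j < Nat.find hex))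

section RpowIntegral

variable {α : Type*} [MeasurableSpace α] (ν : Measure α) {f : α → ℝ} {S : Set α}

theorem ofReal_mul_measure_le_setLIntegral_rpow_neg {γ c r : ℝ} (hf : Measurable f)
    (hS : MeasurableSet S) (hc : 0 < c) (hr : 0 < r) (hfS : ∀ y ∈ S, f y ≤ r) :
    ENNReal.ofReal (min 1 (c ^ (-γ)) * r ^ (-γ)) * ν (S ∩ {y | c * r ≤ f y}) ≤
      ∫⁻ y in S, ENNReal.ofReal (f y ^ (-γ)) ∂ν := by
  have hG : MeasurableSet (S ∩ {y | c * r ≤ f y}) :=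
    hS.inter (measurableSet_le measurable_const hf)
  have hpt : ∀ y ∈ S ∩ {y | c * r ≤ f y}, min 1 (c ^ (-γ)) * r ^ (-γ) ≤ f y ^ (-γ) := by
    rintro y ⟨hyS, hy⟩
    have hy0 : 0 < f y := (mul_pos hc hr).trans_le hy
    rcases le_total 0 γ with hγ | hγ
    · calc min 1 (c ^ (-γ)) * r ^ (-γ) ≤ 1 * r ^ (-γ) := by gcongr; exact min_le_left _ _
        _ ≤ f y ^ (-γ) := by
          rw [one_mul]
          exact Real.rpow_le_rpow_of_nonpos hy0 (hfS y hyS) (by linarith)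
    · calc min 1 (c ^ (-γ)) * r ^ (-γ) ≤ c ^ (-γ) * r ^ (-γ) := by gcongr; exact min_le_right _ _
        _ = (c * r) ^ (-γ) := (Real.mul_rpow hc.le hr.le).symm
        _ ≤ f y ^ (-γ) := Real.rpow_le_rpow (by positivity) hy (by linarith)
  calc ENNReal.ofReal (min 1 (c ^ (-γ)) * r ^ (-γ)) * ν (S ∩ {y | c * r ≤ f y})
      = ∫⁻ _ in S ∩ {y | c * r ≤ f y}, ENNReal.ofReal (min 1 (c ^ (-γ)) * r ^ (-γ)) ∂ν :=
        (setLIntegral_const _ _).symm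
    _ ≤ ∫⁻ y in S ∩ {y | c * r ≤ f y}, ENNReal.ofReal (f y ^ (-γ)) ∂ν :=
        setLIntegral_mono' hG fun y hy => ENNReal.ofReal_le_ofReal (hpt y hy)
    _ ≤ ∫⁻ y in S, ENNReal.ofReal (f y ^ (-γ)) ∂ν := lintegral_mono_set inter_subset_left

theorem setLIntegral_rpow_neg_le_of_measure_lt_le {a B γ r : ℝ} (hγ : 0 < γ) (hγa : γ < a)
    (hB : 0 ≤ B) (hr : 0 < r) (hfS : ∀ y ∈ S, 0 ≤ f y ∧ f y < r)
    (hlevel : ∀ t, 0 < t → t ≤ r → ν (S ∩ {y | f y < t}) ≤ ENNReal.ofReal (B * t ^ a)) :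
    ∫⁻ y in S, ENNReal.ofReal (f y ^ (-γ)) ∂ν ≤
      ENNReal.ofReal (2 ^ γ * B * r ^ (a - γ) * (1 - 2 ^ (γ - a))⁻¹) := by
  have hq : (2 : ℝ) ^ (γ - a) < 1 := Real.rpow_lt_one_of_one_lt_of_neg one_lt_two (by linarith)
  -- `Real.rpow` has `0 ^ (-γ) = 0` for `γ ≠ 0`: the integrand vanishes where `f = 0`.
  have hzero : ∫⁻ y in S ∩ {y | f y = 0}, ENNReal.ofReal (f y ^ (-γ)) ∂ν = 0 := by
    refine le_antisymm ((setLIntegral_mono measurable_const fun y hy => ?_).trans_eq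
      (lintegral_zero (μ := ν.restrict _))) zero_le
    rw [show f y = 0 from hy.2, Real.zero_rpow (neg_ne_zero.2 hγ.ne'), ENNReal.ofReal_zero]
  have hk : ∀ k : ℕ, ∫⁻ y in S ∩ {y | r / 2 ^ (k + 1) ≤ f y ∧ f y < r / 2 ^ k},
      ENNReal.ofReal (f y ^ (-γ)) ∂ν ≤
        ENNReal.ofReal (2 ^ γ * B * r ^ (a - γ)) * ENNReal.ofReal (2 ^ (γ - a)) ^ k := by
    intro k
    have hrk : 0 < r / 2 ^ (k + 1) := by positivity
    calc _ ≤ ∫⁻ _ in S ∩ {y | r / 2 ^ (k + 1) ≤ f y ∧ f y < r / 2 ^ k},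
          ENNReal.ofReal ((r / 2 ^ (k + 1)) ^ (-γ)) ∂ν :=
          setLIntegral_mono measurable_const fun y hy => ENNReal.ofReal_le_ofReal
            (Real.rpow_le_rpow_of_nonpos hrk hy.2.1 (by linarith))
      _ ≤ ENNReal.ofReal ((r / 2 ^ (k + 1)) ^ (-γ)) * ENNReal.ofReal (B * (r / 2 ^ k) ^ a) := by
          rw [setLIntegral_const]
          gcongr
          exact (measure_mono (inter_subset_inter_right _ fun _ hy => hy.2)).trans
            (hlevel _ (by positivity) (div_le_self hr.le (one_le_pow₀ one_le_two)))
      _ = ENNReal.ofReal (2 ^ γ * B * r ^ (a - γ)) * ENNReal.ofReal (2 ^ (γ - a)) ^ k := by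
          rw [← ENNReal.ofReal_mul (by positivity), ← ENNReal.ofReal_pow (by positivity),
            ← ENNReal.ofReal_mul (by positivity), mul_left_comm,
            rpow_neg_div_two_pow_succ_mul_rpow_div_two_pow hr]
          congr 1
          ring
  calc ∫⁻ y in S, ENNReal.ofReal (f y ^ (-γ)) ∂ν
      ≤ ∫⁻ y in S ∩ {y | f y = 0}, ENNReal.ofReal (f y ^ (-γ)) ∂ν +
          ∑' k : ℕ, ∫⁻ y in S ∩ {y | r / 2 ^ (k + 1) ≤ f y ∧ f y < r / 2 ^ k},
            ENNReal.ofReal (f y ^ (-γ)) ∂ν :=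
        (lintegral_mono_set (subset_zero_union_iUnion_dyadic hfS)).trans
          ((lintegral_union_le _ _ _).trans (add_le_add le_rfl (lintegral_iUnion_le _ _)))
    _ ≤ ∑' k : ℕ, ENNReal.ofReal (2 ^ γ * B * r ^ (a - γ)) * ENNReal.ofReal (2 ^ (γ - a)) ^ k := by
        rw [hzero, zero_add]
        exact ENNReal.tsum_le_tsum hk
    _ = ENNReal.ofReal (2 ^ γ * B * r ^ (a - γ) * (1 - 2 ^ (γ - a))⁻¹) := by
        rw [ENNReal.tsum_mul_left, ENNReal.tsum_geometric, ← ENNReal.ofReal_one,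
          ← ENNReal.ofReal_sub _ (by positivity), ← ENNReal.ofReal_inv_of_pos (by linarith),
          ← ENNReal.ofReal_mul (by positivity)]

end RpowIntegral

section AddHaar

variable {E : Type*} [NormedAddCommGroup E] [NormedSpace ℝ E] [FiniteDimensional ℝ E]
  [MeasurableSpace E] [BorelSpace E] (ν : Measure E) [ν.IsAddHaarMeasure]

theorem exists_addHaar_ball_eq_ofReal :
    ∃ ω : ℝ, 0 < ω ∧ ∀ (x : E) {r : ℝ}, 0 < r →
      ν (ball x r) = ENNReal.ofReal (ω * r ^ (finrank ℝ E : ℝ)) := by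
  refine ⟨(ν (ball 0 1)).toReal,
    ENNReal.toReal_pos (measure_ball_pos ν 0 one_pos).ne' measure_ball_lt_top.ne,
    fun x r hr => ?_⟩
  rw [ν.addHaar_ball_of_pos x hr, ENNReal.ofReal_mul ENNReal.toReal_nonneg,
    ENNReal.ofReal_toReal measure_ball_lt_top.ne, Real.rpow_natCast, mul_comm]

theorem exists_addHaar_inter_thickening_le {d C : ℝ} (hd : 0 ≤ d) (hC : 0 < C) :
    ∃ A : ℝ, 0 < A ∧ ∀ (μ : Measure E) (Γ : Set E), IsLowerAhlforsRegular μ Γ d C →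
      IsUpperAhlforsRegular μ Γ d C → ∀ x ∈ Γ, ∀ r t : ℝ, 0 < t → t ≤ r →
        ENNReal.ofReal r < ediam Γ → ν (ball x r ∩ {Y | infDist Y Γ < t}) ≤
          ENNReal.ofReal (A * t ^ ((finrank ℝ E : ℝ) - d) * r ^ d) := by
  obtain ⟨K, hK, hKμ⟩ := exists_measure_inter_ball_le_of_isUpperAhlforsRegular E
  obtain ⟨ω, hω, hball⟩ := exists_addHaar_ball_eq_ofReal ν
  set N : ℝ := (finrank ℝ E : ℝ)
  refine ⟨K * C ^ 2 * 3 ^ d * 6 ^ N * ω, by positivity,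
    fun μ Γ hlow hup x hx r t ht htr hrD => ?_⟩
  have hr := ht.trans_le htr
  obtain ⟨T, hTsub, hTdisj, hTcov⟩ :=
    exists_pairwiseDisjoint_ball_cover_inter_thickening hx ht htr
  have hTc : T.Countable :=
    hTdisj.countable_of_isOpen (fun _ _ => isOpen_ball) fun _ _ => nonempty_ball.2 ht
  have hpack : T.encard * ENNReal.ofReal (C⁻¹ * t ^ d) ≤ ENNReal.ofReal (K * C * (3 * r) ^ d) :=
    calc T.encard * ENNReal.ofReal (C⁻¹ * t ^ d) ≤ μ (Γ ∩ ⋃ b ∈ T, ball b t) :=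
          encard_mul_le_measure_inter_biUnion_ball μ hTc hTdisj fun b hb =>
            hlow b (hTsub hb).1 t ht ((ENNReal.ofReal_le_ofReal htr).trans_lt hrD)
      _ ≤ μ (Γ ∩ ball x (3 * r)) := by
          refine measure_mono (inter_subset_inter_right _ (iUnion₂_subset fun b hb => ?_))
          exact ball_subset_ball' (by linarith [mem_closedBall.1 (hTsub hb).2])
      _ ≤ ENNReal.ofReal (K * C * (3 * r) ^ d) :=
          hKμ μ Γ hd hC.le hup (ediam_pos_iff.1 (pos_of_gt hrD)) x hx _ (by positivity)
  have hcount : T.encard ≤ ENNReal.ofReal (K * C * (3 * r) ^ d / (C⁻¹ * t ^ d)) := by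
    rw [ENNReal.ofReal_div_of_pos (by positivity)]
    exact (ENNReal.le_div_iff_mul_le (Or.inl (by positivity)) (Or.inl ENNReal.ofReal_ne_top)).2
      hpack
  calc ν (ball x r ∩ {Y | infDist Y Γ < t}) ≤ ∑' b : T, ν (ball b (6 * t)) :=
        (measure_mono hTcov).trans (measure_biUnion_le ν hTc _)
    _ = T.encard * ENNReal.ofReal (ω * (6 * t) ^ N) := by
        simp_rw [hball _ (by positivity : 0 < 6 * t)]
        exact ENNReal.tsum_set_const T _
    _ ≤ ENNReal.ofReal (K * C * (3 * r) ^ d / (C⁻¹ * t ^ d) * (ω * (6 * t) ^ N)) :=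
        (mul_le_mul_left hcount _).trans_eq (ENNReal.ofReal_mul (by positivity)).symm
    _ = ENNReal.ofReal (K * C ^ 2 * 3 ^ d * 6 ^ N * ω * t ^ (N - d) * r ^ d) := by
        rw [Real.mul_rpow (by norm_num) hr.le, Real.mul_rpow (by norm_num) ht.le,
          Real.rpow_sub ht]
        field_simp

theorem exists_ofReal_le_setLIntegral_infDist_rpow_neg {d C γ : ℝ} (hd : 0 ≤ d)
    (hdN : d < finrank ℝ E) (hC : 0 < C) :
    ∃ c : ℝ, 0 < c ∧ ∀ (μ : Measure E) (Γ : Set E), IsLowerAhlforsRegular μ Γ d C →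
      IsUpperAhlforsRegular μ Γ d C → ∀ x ∈ Γ, ∀ r : ℝ, 0 < r → ENNReal.ofReal r < ediam Γ →
        ENNReal.ofReal (c * r ^ ((finrank ℝ E : ℝ) - γ)) ≤
          ∫⁻ Y in ball x r, ENNReal.ofReal (infDist Y Γ ^ (-γ)) ∂ν := by
  obtain ⟨A, hA, hthick⟩ := exists_addHaar_inter_thickening_le ν hd hC
  obtain ⟨ω, hω, hball⟩ := exists_addHaar_ball_eq_ofReal ν
  set N : ℝ := (finrank ℝ E : ℝ)
  obtain ⟨s, hs0, hs1, hsA⟩ := exists_pos_le_one_mul_rpow_le hA (sub_pos.2 hdN) (half_pos hω)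
  refine ⟨min 1 (s ^ (-γ)) * (ω / 2), by positivity,
    fun μ Γ hlow hup x hx r hr hrD => ?_⟩
  have hrN : r ^ (N - d) * r ^ d = r ^ N := by rw [← Real.rpow_add hr, sub_add_cancel]
  have hnear : ν (ball x r ∩ {Y | infDist Y Γ < s * r}) ≤ ENNReal.ofReal (ω / 2 * r ^ N) := by
    refine (hthick μ Γ hlow hup x hx r (s * r) (by positivity)
      (mul_le_of_le_one_left hr.le hs1) hrD).trans (ENNReal.ofReal_le_ofReal ?_)
    calc A * (s * r) ^ (N - d) * r ^ d = A * s ^ (N - d) * (r ^ (N - d) * r ^ d) := by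
          rw [Real.mul_rpow hs0.le hr.le]
          ring
      _ ≤ ω / 2 * r ^ N := by
          rw [hrN]
          gcongr
  have hfar : ENNReal.ofReal (ω / 2 * r ^ N) ≤ ν (ball x r ∩ {Y | s * r ≤ infDist Y Γ}) := by
    have hsplit : ball x r ⊆ (ball x r ∩ {Y | s * r ≤ infDist Y Γ}) ∪
        (ball x r ∩ {Y | infDist Y Γ < s * r}) := fun Y hY =>
      (le_or_gt (s * r) (infDist Y Γ)).imp (⟨hY, ·⟩) (⟨hY, ·⟩)
    have hcover := (measure_mono (μ := ν) hsplit).trans (measure_union_le _ _)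
    rw [hball x hr, show ω * r ^ N = ω / 2 * r ^ N + ω / 2 * r ^ N by ring,
      ENNReal.ofReal_add (by positivity) (by positivity)] at hcover
    exact (ENNReal.add_le_add_iff_right ENNReal.ofReal_ne_top).1 (hcover.trans (by gcongr))
  calc ENNReal.ofReal (min 1 (s ^ (-γ)) * (ω / 2) * r ^ (N - γ))
      = ENNReal.ofReal (min 1 (s ^ (-γ)) * r ^ (-γ)) * ENNReal.ofReal (ω / 2 * r ^ N) := by
        rw [← ENNReal.ofReal_mul (by positivity), Real.rpow_sub hr, Real.rpow_neg hr.le]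
        congr 1
        ring
    _ ≤ ENNReal.ofReal (min 1 (s ^ (-γ)) * r ^ (-γ)) *
          ν (ball x r ∩ {Y | s * r ≤ infDist Y Γ}) := by gcongr
    _ ≤ ∫⁻ Y in ball x r, ENNReal.ofReal (infDist Y Γ ^ (-γ)) ∂ν :=
        ofReal_mul_measure_le_setLIntegral_rpow_neg ν (continuous_infDist_pt Γ).measurable
          measurableSet_ball hs0 hr fun Y hY => (infDist_le_dist_of_mem hx).trans (mem_ball.1 hY).le

theorem exists_setLIntegral_infDist_rpow_neg_le {d C γ : ℝ} (hd : 0 ≤ d) (hC : 0 < C)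
    (hγ : γ < finrank ℝ E - d) :
    ∃ M : ℝ, 0 < M ∧ ∀ (μ : Measure E) (Γ : Set E), IsLowerAhlforsRegular μ Γ d C →
      IsUpperAhlforsRegular μ Γ d C → ∀ x ∈ Γ, ∀ r : ℝ, 0 < r → ENNReal.ofReal r < ediam Γ →
        ∫⁻ Y in ball x r, ENNReal.ofReal (infDist Y Γ ^ (-γ)) ∂ν ≤
          ENNReal.ofReal (M * r ^ ((finrank ℝ E : ℝ) - γ)) := by
  obtain ⟨A, hA, hthick⟩ := exists_addHaar_inter_thickening_le ν hd hC
  obtain ⟨ω, hω, hball⟩ := exists_addHaar_ball_eq_ofReal ν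
  set N : ℝ := (finrank ℝ E : ℝ)
  have hq : (2 : ℝ) ^ (γ - (N - d)) < 1 :=
    Real.rpow_lt_one_of_one_lt_of_neg one_lt_two (by linarith)
  set M₀ := 2 ^ γ * A * (1 - 2 ^ (γ - (N - d)))⁻¹
  refine ⟨max ω M₀, lt_max_of_lt_left hω, fun μ Γ hlow hup x hx r hr hrD => ?_⟩
  have hdist : ∀ Y ∈ ball x r, infDist Y Γ < r := fun Y hY =>
    (infDist_le_dist_of_mem hx).trans_lt (mem_ball.1 hY)
  rcases le_or_gt γ 0 with hγ0 | hγ0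
  · calc ∫⁻ Y in ball x r, ENNReal.ofReal (infDist Y Γ ^ (-γ)) ∂ν
        ≤ ∫⁻ _ in ball x r, ENNReal.ofReal (r ^ (-γ)) ∂ν :=
          setLIntegral_mono measurable_const fun Y hY => ENNReal.ofReal_le_ofReal
            (Real.rpow_le_rpow infDist_nonneg (hdist Y hY).le (by linarith))
      _ = ENNReal.ofReal (ω * r ^ (N - γ)) := by
          rw [setLIntegral_const, hball x hr, ← ENNReal.ofReal_mul (by positivity),
            Real.rpow_sub hr, Real.rpow_neg hr.le]
          congr 1
          ring
      _ ≤ ENNReal.ofReal (max ω M₀ * r ^ (N - γ)) := by gcongr; exact le_max_left _ _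
  · have hM₀ : 0 ≤ M₀ := by
      have := sub_pos.2 hq
      positivity
    calc ∫⁻ Y in ball x r, ENNReal.ofReal (infDist Y Γ ^ (-γ)) ∂ν
        ≤ ENNReal.ofReal (2 ^ γ * (A * r ^ d) * r ^ (N - d - γ) * (1 - 2 ^ (γ - (N - d)))⁻¹) :=
          setLIntegral_rpow_neg_le_of_measure_lt_le ν hγ0 (by linarith) (by positivity) hr
            (fun Y hY => ⟨infDist_nonneg, hdist Y hY⟩) fun t ht htr =>
              (hthick μ Γ hlow hup x hx r t ht htr hrD).trans_eq (by rw [mul_right_comm])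
      _ = ENNReal.ofReal (M₀ * r ^ (N - γ)) := by
          rw [show N - γ = d + (N - d - γ) by ring, Real.rpow_add hr]
          congr 1
          ring
      _ ≤ ENNReal.ofReal (max ω M₀ * r ^ (N - γ)) := by gcongr; exact le_max_right _ _

end AddHaar

theorem ENNReal.div_le_ofReal_sq_mul_div_rpow {a b : ℝ≥0∞} {C r s e : ℝ} (hC : 0 < C)
    (hr : 0 ≤ r) (hs : 0 < s) (ha : a ≤ ENNReal.ofReal (C * r ^ e))
    (hb : ENNReal.ofReal (C⁻¹ * s ^ e) ≤ b) : a / b ≤ ENNReal.ofReal (C ^ 2 * (r / s) ^ e) :=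
  calc a / b ≤ ENNReal.ofReal (C * r ^ e) / ENNReal.ofReal (C⁻¹ * s ^ e) := ENNReal.div_le_div ha hb
    _ = ENNReal.ofReal (C ^ 2 * (r / s) ^ e) := by
        rw [← ENNReal.ofReal_div_of_pos (by positivity), Real.div_rpow hr hs.le]
        congr 1
        field_simp

theorem ENNReal.ofReal_le_div_ofReal_mul {m μ : ℝ≥0∞} {c K r d e : ℝ} (hK : 0 < K)
    (hr : 0 < r) (hm : ENNReal.ofReal (c * r ^ (e + (1 + d))) ≤ m)
    (hμ : μ ≤ ENNReal.ofReal (K * r ^ d)) :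
    ENNReal.ofReal (c / K * r ^ e) ≤ m / (ENNReal.ofReal r * μ) := by
  calc ENNReal.ofReal (c / K * r ^ e)
      = ENNReal.ofReal (c * r ^ (e + (1 + d))) / ENNReal.ofReal (r * (K * r ^ d)) := by
        rw [← ENNReal.ofReal_div_of_pos (by positivity), Real.rpow_add hr, Real.rpow_add hr,
          Real.rpow_one]
        congr 1
        field_simp
    _ ≤ m / (ENNReal.ofReal r * μ) := by
        rw [ENNReal.ofReal_mul hr.le]
        gcongr

theorem ENNReal.div_ofReal_mul_le {m μ : ℝ≥0∞} {M K r d e : ℝ} (hK : 0 < K) (hr : 0 < r)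
    (hm : m ≤ ENNReal.ofReal (M * r ^ (e + (1 + d))))
    (hμ : ENNReal.ofReal (K⁻¹ * r ^ d) ≤ μ) :
    m / (ENNReal.ofReal r * μ) ≤ ENNReal.ofReal (M * K * r ^ e) := by
  calc m / (ENNReal.ofReal r * μ)
      ≤ ENNReal.ofReal (M * r ^ (e + (1 + d))) / ENNReal.ofReal (r * (K⁻¹ * r ^ d)) := by
        rw [ENNReal.ofReal_mul hr.le]
        gcongr
    _ = ENNReal.ofReal (M * K * r ^ e) := by
        rw [← ENNReal.ofReal_div_of_pos (by positivity), Real.rpow_add hr, Real.rpow_add hr,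
          Real.rpow_one]
        congr 1
        field_simp

theorem exists_rhoRatio_bounds {n : ℕ} {d γ C₁ : ℝ} (hd : 0 ≤ d) (hdn : d < n + 1)
    (hγ : γ < n + 1 - d) (hC₁ : 0 < C₁) :
    ∃ C : ℝ, 1 ≤ C ∧ ∀ Γ : Set (EuclideanSpace ℝ (Fin (n + 1))),
      IsLowerAhlforsRegular μH[d] Γ d C₁ → IsUpperAhlforsRegular μH[d] Γ d C₁ →
        ∀ x ∈ Γ, ∀ r : ℝ, 0 < r → ENNReal.ofReal r < ediam Γ →
          ENNReal.ofReal (C⁻¹ * r ^ ((n : ℝ) - d - γ)) ≤ rhoRatio Γ d γ x r ∧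
            rhoRatio Γ d γ x r ≤ ENNReal.ofReal (C * r ^ ((n : ℝ) - d - γ)) := by
  have hN : (finrank ℝ (EuclideanSpace ℝ (Fin (n + 1))) : ℝ) = n - d - γ + (1 + d) + γ := by
    simp only [finrank_euclideanSpace_fin, Nat.cast_add, Nat.cast_one]
    ring
  obtain ⟨c, hc, hmlow⟩ :=
    exists_ofReal_le_setLIntegral_infDist_rpow_neg volume (γ := γ) hd (by rw [hN]; linarith) hC₁
  obtain ⟨M, hM, hmup⟩ :=
    exists_setLIntegral_infDist_rpow_neg_le volume (γ := γ) hd hC₁ (by rw [hN]; linarith)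
  simp only [hN, add_sub_cancel_right] at hmlow hmup
  refine ⟨max 1 (max (M * C₁) (C₁ / c)), le_max_left _ _,
    fun Γ hΓl hΓu x hx r hr hrD => ?_⟩
  unfold rhoRatio distWeightMeasure
  constructor
  · refine le_trans ?_ (ENNReal.ofReal_le_div_ofReal_mul hC₁ hr
      (hmlow μH[d] Γ hΓl hΓu x hx r hr hrD) (hΓu x hx r hr hrD))
    gcongr
    refine inv_le_of_inv_le₀ (by positivity) ?_
    rw [inv_div]
    exact (le_max_right _ _).trans (le_max_right _ _)
  · refine (ENNReal.div_ofReal_mul_le hC₁ hr (hmup μH[d] Γ hΓl hΓu x hx r hr hrD)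
      (hΓl x hx r hr hrD)).trans ?_
    gcongr
    exact (le_max_left _ _).trans (le_max_right _ _)

theorem statement11_general (n : ℕ) (d : ℝ) (hd0 : 0 < d) (hdn : d < n)
    (γ : ℝ) (hγ1 : (n : ℝ) - d - 1 < γ) (hγ2 : γ < (n : ℝ) - d + 1)
    (C₁ : ℝ) (hC₁ : 1 ≤ C₁) :
    ∃ C : ℝ, 1 ≤ C ∧
      ∀ Γ : Set (EuclideanSpace ℝ (Fin (n + 1))), IsClosed Γ → Γ.Nonempty →
        -- Γ is d-ADR with constant C₁
        (∀ x ∈ Γ, ∀ r : ℝ, 0 < r → ENNReal.ofReal r < EMetric.diam Γ →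
          ENNReal.ofReal (C₁⁻¹ * r ^ d) ≤ μH[d] (Γ ∩ ball x r) ∧
            μH[d] (Γ ∩ ball x r) ≤ ENNReal.ofReal (C₁ * r ^ d)) →
        -- C⁻¹ r^{n-d-γ} ≤ ρ(x,r) ≤ C r^{n-d-γ} for x ∈ Γ, 0 < r < diam Γ
        (∀ x ∈ Γ, ∀ r : ℝ, 0 < r → ENNReal.ofReal r < EMetric.diam Γ →
          ENNReal.ofReal (C⁻¹ * r ^ ((n : ℝ) - d - γ)) ≤ rhoRatio Γ d γ x r ∧
            rhoRatio Γ d γ x r ≤ ENNReal.ofReal (C * r ^ ((n : ℝ) - d - γ))) ∧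
        -- in particular, ε := 1+d+γ-n > 0 and ρ(x,r)/ρ(x,s) ≤ C² (r/s)^{1-ε}
        (0 < 1 + d + γ - (n : ℝ)) ∧
        (∀ x ∈ Γ, ∀ r s : ℝ, 0 < s → s ≤ r → ENNReal.ofReal r < EMetric.diam Γ →
          rhoRatio Γ d γ x r / rhoRatio Γ d γ x s ≤
            ENNReal.ofReal (C ^ 2 * (r / s) ^ (1 - (1 + d + γ - (n : ℝ))))) := by
  obtain ⟨C, hC, hρ⟩ := exists_rhoRatio_bounds (γ := γ) hd0.le (by linarith) (by linarith)
    (zero_lt_one.trans_le hC₁)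
  refine ⟨C, hC, fun Γ _ _ hADR => ?_⟩
  have hbounds := hρ Γ (fun x hx r hr hrD => (hADR x hx r hr hrD).1)
    (fun x hx r hr hrD => (hADR x hx r hr hrD).2)
  refine ⟨hbounds, by linarith, fun x hx r s hs hsr hrD => ?_⟩
  rw [show 1 - (1 + d + γ - (n : ℝ)) = n - d - γ by ring]
  exact ENNReal.div_le_ofReal_sq_mul_div_rpow (zero_lt_one.trans_le hC) (hs.le.trans hsr) hs
    (hbounds x hx r (hs.trans_le hsr) hrD).2
    (hbounds x hx s hs ((ENNReal.ofReal_le_ofReal hsr).trans_lt hrD)).1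

/-- for a `d`-ADR set `Γ ⊆ ℝ^{n+1}` (`0 < d < n`),
`γ ∈ (n-d-1, n-d+1)`, `μ = 𝓗^d|_Γ` and `m = dist(·,Γ)^{-γ} dY`, the ratio
`ρ(x,r) = m(B(x,r))/(r μ(Γ ∩ B(x,r)))` satisfies `ρ(x,r) ≃ r^{n-d-γ}` for
`x ∈ Γ`, `0 < r < diam Γ`; in particular, with `ε := 1+d+γ-n > 0`,
`ρ(x,r)/ρ(x,s) ≤ C² (r/s)^{1-ε}` for `0 < s ≤ r < diam Γ`. -/
theorem statement11 (n : ℕ) (hn : 1 ≤ n) (d : ℝ) (hd0 : 0 < d) (hdn : d < n)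
    (γ : ℝ) (hγ1 : (n : ℝ) - d - 1 < γ) (hγ2 : γ < (n : ℝ) - d + 1)
    (C₁ : ℝ) (hC₁ : 1 ≤ C₁) :
    ∃ C : ℝ, 1 ≤ C ∧
      ∀ Γ : Set (EuclideanSpace ℝ (Fin (n + 1))), IsClosed Γ → Γ.Nonempty →
        -- Γ is d-ADR with constant C₁
        (∀ x ∈ Γ, ∀ r : ℝ, 0 < r → ENNReal.ofReal r < EMetric.diam Γ →
          ENNReal.ofReal (C₁⁻¹ * r ^ d) ≤ μH[d] (Γ ∩ ball x r) ∧
            μH[d] (Γ ∩ ball x r) ≤ ENNReal.ofReal (C₁ * r ^ d)) →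
        -- C⁻¹ r^{n-d-γ} ≤ ρ(x,r) ≤ C r^{n-d-γ} for x ∈ Γ, 0 < r < diam Γ
        (∀ x ∈ Γ, ∀ r : ℝ, 0 < r → ENNReal.ofReal r < EMetric.diam Γ →
          ENNReal.ofReal (C⁻¹ * r ^ ((n : ℝ) - d - γ)) ≤ rhoRatio Γ d γ x r ∧
            rhoRatio Γ d γ x r ≤ ENNReal.ofReal (C * r ^ ((n : ℝ) - d - γ))) ∧
        -- in particular, ε := 1+d+γ-n > 0 and ρ(x,r)/ρ(x,s) ≤ C² (r/s)^{1-ε}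
        (0 < 1 + d + γ - (n : ℝ)) ∧
        (∀ x ∈ Γ, ∀ r s : ℝ, 0 < s → s ≤ r → ENNReal.ofReal r < EMetric.diam Γ →
          rhoRatio Γ d γ x r / rhoRatio Γ d γ x s ≤
            ENNReal.ofReal (C ^ 2 * (r / s) ^ (1 - (1 + d + γ - (n : ℝ))))) :=
  statement11_general n d hd0 hdn γ hγ1 hγ2 C₁ hC₁
end
end

section
/- Let 0 < α < α₁ and c > 0. There exists τ₁ > 0, depending only on α, α₁ and c, such that for every r > 0, every τ ≥ τ₁, and all x, x₁ ∈ ∂Ω with |x − x₁| ≤ c·r, the following hold: (i) Γ^α(x) ∖ B(x, τ r) ⊆ Γ^{α₁}(x₁); and (ii) B(x₁, δ(Y)) ⊆ B(x, 2δ(Y)) for every Y ∈ Γ^α(x) ∖ B(x, τ r). -/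
open Metric MeasureTheory Set
open scoped ENNReal

noncomputable section

/-- for `0 < α < α₁` and `c > 0`, there exists `τ₁ > 0` (depending
only on `α`, `α₁`, `c`) such that for every `r > 0`, `τ ≥ τ₁` and boundary points
`x, x₁` with `|x - x₁| ≤ c r`: (i) `Γ^α(x) ∖ B(x, τr) ⊆ Γ^{α₁}(x₁)`; and
(ii) `B(x₁, δ(Y)) ⊆ B(x, 2δ(Y))` for every `Y ∈ Γ^α(x) ∖ B(x, τr)`. -/
theorem statement13 (α α₁ c : ℝ) (hα : 0 < α) (hαα₁ : α < α₁) (hc : 0 < c) :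
    ∃ τ₁ : ℝ, 0 < τ₁ ∧
      ∀ (n : ℕ) (Ω : Set (EuclideanSpace ℝ (Fin (n + 1)))),
        IsOpen Ω → Ω.Nonempty → (frontier Ω).Nonempty →
        ∀ r τ : ℝ, 0 < r → τ₁ ≤ τ →
          ∀ x ∈ frontier Ω, ∀ x₁ ∈ frontier Ω, dist x x₁ ≤ c * r →
            (cone Ω α x \ ball x (τ * r) ⊆ cone Ω α₁ x₁) ∧
            (∀ Y ∈ cone Ω α x \ ball x (τ * r),
              ball x₁ (bdist Ω Y) ⊆ ball x (2 * bdist Ω Y)) := by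
  have hs : 0 < α₁ - α := by linarith
  have h1α : (0:ℝ) < 1 + α := by linarith
  refine ⟨(1 + α) * c / (α₁ - α) + (1 + α) * c + 1, ?_, ?_⟩
  · have : 0 < (1 + α) * c / (α₁ - α) := div_pos (by positivity) hs
    nlinarith
  intro n Ω _ _ _ r τ hr hτ x hx x₁ hx₁ hxx₁
  -- key facts for any Y in the truncated cone
  have key : ∀ Y ∈ cone Ω α x \ ball x (τ * r),
      c * r < (α₁ - α) * bdist Ω Y ∧ c * r < bdist Ω Y ∧
        dist Y x < (1 + α) * bdist Ω Y ∧ Y ∈ Ω := by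
    intro Y hY
    obtain ⟨⟨hYΩ, hYd⟩, hYb⟩ := hY
    have hnb : τ * r ≤ dist Y x := by simpa [mem_ball, not_lt] using hYb
    have hδ : τ * r < (1 + α) * bdist Ω Y := lt_of_le_of_lt hnb hYd
    have h1 : ((1 + α) * c / (α₁ - α) + (1 + α) * c + 1) * r ≤ τ * r :=
      mul_le_mul_of_nonneg_right hτ hr.le
    have hdc : (1 + α) * c / (α₁ - α) * (α₁ - α) = (1 + α) * c :=
      div_mul_cancel₀ _ (ne_of_gt hs)
    have hpos : 0 < (1 + α) * c / (α₁ - α) := div_pos (by positivity) hs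
    constructor
    · nlinarith [mul_lt_mul_of_pos_right (lt_of_le_of_lt h1 hδ) hs,
        mul_pos (mul_pos h1α hc) hr, mul_pos hs hr]
    refine ⟨?_, hYd, hYΩ⟩
    nlinarith [mul_pos hpos hr]
  refine ⟨?_, ?_⟩
  · intro Y hY
    obtain ⟨h₁, _, h₃, h₄⟩ := key Y hY
    refine ⟨h₄, ?_⟩
    calc dist Y x₁ ≤ dist Y x + dist x x₁ := dist_triangle _ _ _
      _ ≤ dist Y x + c * r := by linarith
      _ < (1 + α₁) * bdist Ω Y := by nlinarith
  · intro Y hY Z hZ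
    obtain ⟨_, h₂, _, _⟩ := key Y hY
    rw [mem_ball] at hZ ⊢
    calc dist Z x ≤ dist Z x₁ + dist x₁ x := dist_triangle _ _ _
      _ < bdist Ω Y + c * r := by rw [dist_comm x₁ x]; linarith
      _ < 2 * bdist Ω Y := by linarith
end
end

section
/- Let Q⁰ ∈ 𝔻 and let α = (α_Q)_{Q ∈ 𝔻_{Q⁰}} be nonnegative numbers. Given M₁ > 0 and K₁ ≥ 1, assume that for every Q₀ ∈ 𝔻_{Q⁰} there exists a pairwise disjoint family 𝓕_{Q₀} = {Q_j} ⊆ 𝔻_{Q₀} ∖ {Q₀} such that μ( Q₀ ∖ ⋃_j Q_j ) ≥ K₁^{-1} μ(Q₀) and 𝔪_α(𝔻_{𝓕_{Q₀}, Q₀}) ≤ M₁ μ(Q₀). Then 𝔪_α(𝔻_Q) ≤ K₁ M₁ μ(Q) for every Q ∈ 𝔻_{Q⁰}; that is, 𝔪_α is a discrete Carleson measure on 𝔻_{Q⁰} with norm at most K₁M₁. -/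
/-! Truncate the Carleson region `𝔻_i` at depth `N` (cubes of generation `< gen i + N`) and
induct on `N`. The region of depth `N + 1` is covered by the sawtooth `𝔻_{F,i}` and the
depth-`N` regions of the cubes `j ∈ F`, which lie strictly deeper because `Q i ∖ ⋃ Q j` has
positive measure. Hence, with `C = K₁ M₁` and `U = ⋃_{j ∈ F} Q j`,
`𝔪(𝔻^{N+1}_i) ≤ M₁ μ(Q i) + C μ(U) = C (K₁⁻¹ μ(Q i) + μ(U)) ≤ C μ(Q i)`,
since `K₁⁻¹ μ(Q i) ≤ μ(Q i ∖ U)`. Letting `N → ∞` gives the claim. -/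

open MeasureTheory Set
open scoped ENNReal

theorem ENNReal.tsum_subtype_le_of_subset_iUnion {α : Type*} {f : α → ℝ≥0∞} {s : Set α}
    {t : ℕ → Set α} (ht : Monotone t) (hs : s ⊆ ⋃ n, t n) {c : ℝ≥0∞}
    (h : ∀ n, ∑' x : t n, f x ≤ c) : ∑' x : s, f x ≤ c := by
  rw [ENNReal.tsum_eq_iSup_sum]
  refine iSup_le fun F => ?_
  choose n hn using fun x : s => mem_iUnion.mp (hs x.2)
  have hF : ∀ x ∈ F, (x : α) ∈ t (F.sup n) := fun x hx => ht (F.le_sup hx) (hn x)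
  calc ∑ x ∈ F, f x = ∑' x : F, f x := (Finset.tsum_subtype F _).symm
    _ ≤ ∑' y : t (F.sup n), f y :=
        ENNReal.tsum_comp_le_tsum_of_injective
          (f := fun x : F => (⟨x.1.1, hF x.1 x.2⟩ : t (F.sup n)))
          (fun _ _ hxy => by
            simp only [Subtype.mk.injEq] at hxy
            exact Subtype.ext (Subtype.ext hxy)) _
    _ ≤ c := h _

section DyadicCarleson

variable {S ι : Type*} (Q : ι → Set S) (gen : ι → ℤ)

def carlesonRegion (i : ι) : Set ι := {k | Q k ⊆ Q i ∧ gen i ≤ gen k}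

def truncCarlesonRegion (i : ι) (N : ℕ) : Set ι :=
  {k | k ∈ carlesonRegion Q gen i ∧ gen k < gen i + N}

def sawtoothRegion (F : Set ι) (i : ι) : Set ι :=
  {k | Q k ⊆ Q i ∧ gen i ≤ gen k ∧ ∀ j ∈ F, k ∉ carlesonRegion Q gen j}

variable {Q gen}

theorem carlesonRegion_trans {i j k : ι} (hkj : k ∈ carlesonRegion Q gen j)
    (hji : j ∈ carlesonRegion Q gen i) : k ∈ carlesonRegion Q gen i :=
  ⟨hkj.1.trans hji.1, hji.2.trans hkj.2⟩

theorem truncCarlesonRegion_zero (i : ι) : truncCarlesonRegion Q gen i 0 = ∅ :=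
  eq_empty_of_forall_notMem fun _ hk => by
    have := hk.1.2; have := hk.2; push_cast at *; omega

theorem truncCarlesonRegion_mono (i : ι) : Monotone (truncCarlesonRegion Q gen i) :=
  fun _ _ hNM _ hk => ⟨hk.1, hk.2.trans_le (by gcongr)⟩

theorem carlesonRegion_subset_iUnion_truncCarlesonRegion (i : ι) :
    carlesonRegion Q gen i ⊆ ⋃ N : ℕ, truncCarlesonRegion Q gen i N := fun k hk =>
  mem_iUnion.mpr ⟨(gen k - gen i).toNat + 1, hk, by have := hk.2; push_cast; omega⟩

theorem truncCarlesonRegion_succ_subset {F : Set ι} {i : ι} (hF : ∀ j ∈ F, gen i < gen j)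
    (N : ℕ) : truncCarlesonRegion Q gen i (N + 1) ⊆
      sawtoothRegion Q gen F i ∪ ⋃ j ∈ F, truncCarlesonRegion Q gen j N := by
  rintro k ⟨⟨hki, hgik⟩, hdepth⟩
  by_cases hk : ∃ j ∈ F, k ∈ carlesonRegion Q gen j
  · obtain ⟨j, hj, hkj⟩ := hk
    have := hF j hj
    have := hkj.2
    refine Or.inr (mem_biUnion hj ⟨hkj, ?_⟩)
    push_cast at hdepth ⊢
    omega
  · push Not at hk
    exact Or.inl ⟨hki, hgik, hk⟩

variable [MeasurableSpace S] {μ : Measure S}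

/-- A cube of the family has the generation of `Q i` only if it equals `Q i`, which would leave
`Q i ∖ ⋃_{j ∈ F} Q j` empty. -/
theorem gen_lt_of_mem_family (hpos : ∀ i, 0 < μ (Q i))
    (hsame : ∀ i j, gen i = gen j → Q i = Q j ∨ Disjoint (Q i) (Q j)) {F : Set ι} {i j : ι}
    (hj : j ∈ F) (hji : j ∈ carlesonRegion Q gen i) (hF : μ (Q i \ ⋃ j ∈ F, Q j) ≠ 0) :
    gen i < gen j := by
  refine hji.2.lt_of_ne fun hgen => ?_
  rcases hsame i j hgen with heq | hdisj
  · refine hF (measure_mono_null (fun x hx => ?_) measure_empty)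
    exact hx.2 (mem_biUnion hj (heq ▸ hx.1))
  · have hempty : Q j = ∅ := hdisj.symm.eq_bot_of_le hji.1
    exact (hpos j).ne' (by rw [hempty, measure_empty])

theorem tsum_truncCarlesonRegion_succ_le [Countable ι] (hmeas : ∀ i, MeasurableSet (Q i))
    (hpos : ∀ i, 0 < μ (Q i))
    (hsame : ∀ i j, gen i = gen j → Q i = Q j ∨ Disjoint (Q i) (Q j))
    {K M : ℝ≥0∞} (hK0 : K ≠ 0) (hK : K ≠ ∞) (a : ι → ℝ≥0∞) {F : Set ι} {i : ι} {N : ℕ}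
    (hFi : ∀ j ∈ F, j ∈ carlesonRegion Q gen i) (hFdisj : F.PairwiseDisjoint Q)
    (hFmeas : K⁻¹ * μ (Q i) ≤ μ (Q i \ ⋃ j ∈ F, Q j))
    (hFsum : ∑' k : sawtoothRegion Q gen F i, a k ≤ M * μ (Q i))
    (ih : ∀ j ∈ F, ∑' k : truncCarlesonRegion Q gen j N, a k ≤ K * M * μ (Q j)) :
    ∑' k : truncCarlesonRegion Q gen i (N + 1), a k ≤ K * M * μ (Q i) := by
  set U := ⋃ j ∈ F, Q j
  have hUmeas : MeasurableSet U := .biUnion F.to_countable fun j _ => hmeas j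
  have hUsub : U ⊆ Q i := iUnion₂_subset fun j hj => (hFi j hj).1
  have hdiff : μ (Q i \ U) ≠ 0 :=
    (lt_of_lt_of_le (ENNReal.mul_pos (ENNReal.inv_ne_zero.mpr hK) (hpos i).ne') hFmeas).ne'
  have hdeeper : ∀ j ∈ F, gen i < gen j := fun j hj =>
    gen_lt_of_mem_family hpos hsame hj (hFi j hj) hdiff
  have hsplit : μ U + μ (Q i \ U) = μ (Q i) := by
    rw [measure_add_sdiff hUmeas.nullMeasurableSet, union_eq_right.mpr hUsub]
  calc ∑' k : truncCarlesonRegion Q gen i (N + 1), a k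
      ≤ ∑' k : ↑(sawtoothRegion Q gen F i ∪ ⋃ j ∈ F, truncCarlesonRegion Q gen j N), a k :=
        ENNReal.tsum_mono_subtype a (truncCarlesonRegion_succ_subset hdeeper N)
    _ ≤ ∑' k : sawtoothRegion Q gen F i, a k +
          ∑' j : F, ∑' k : truncCarlesonRegion Q gen j N, a k :=
        (ENNReal.tsum_union_le a _ _).trans
          (add_le_add_right (ENNReal.tsum_biUnion_le_tsum a _ _) _)
    _ ≤ M * μ (Q i) + ∑' j : F, K * M * μ (Q j) :=
        add_le_add hFsum (ENNReal.tsum_le_tsum fun j => ih j j.2)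
    _ = K * M * (μ U + K⁻¹ * μ (Q i)) := by
        rw [ENNReal.tsum_mul_left, ← measure_biUnion F.to_countable hFdisj fun j _ => hmeas j,
          mul_add, show K * M * (K⁻¹ * μ (Q i)) = M * (K * K⁻¹) * μ (Q i) by ring,
          ENNReal.mul_inv_cancel hK0 hK, mul_one, add_comm]
    _ ≤ K * M * μ (Q i) := by
        gcongr
        calc μ U + K⁻¹ * μ (Q i) ≤ μ U + μ (Q i \ U) := by gcongr
          _ = μ (Q i) := hsplit

end DyadicCarleson

theorem statement14_general {S ι : Type*} [MeasurableSpace S] [Countable ι]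
    (μ : Measure S) (Q : ι → Set S) (gen : ι → ℤ)
    (hmeas : ∀ i, MeasurableSet (Q i))
    (hpos : ∀ i, 0 < μ (Q i))
    (hsame : ∀ i j, gen i = gen j → Q i = Q j ∨ Disjoint (Q i) (Q j))
    (a : ι → ℝ≥0∞) (i₀ : ι) (M₁ K₁ : ℝ≥0∞) (hM₁ : 0 < M₁) (hK₁ : 1 ≤ K₁)
    (hyp : ∀ i, Q i ⊆ Q i₀ → gen i₀ ≤ gen i →
      ∃ F : Set ι,
        (∀ j ∈ F, Q j ⊆ Q i ∧ gen i ≤ gen j ∧ j ≠ i) ∧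
        F.PairwiseDisjoint Q ∧
        K₁⁻¹ * μ (Q i) ≤ μ (Q i \ ⋃ j ∈ F, Q j) ∧
        ∑' k : {k : ι // Q k ⊆ Q i ∧ gen i ≤ gen k ∧
            ∀ j ∈ F, ¬(Q k ⊆ Q j ∧ gen j ≤ gen k)}, a k.1 ≤ M₁ * μ (Q i)) :
    ∀ i, Q i ⊆ Q i₀ → gen i₀ ≤ gen i →
      ∑' k : {k : ι // Q k ⊆ Q i ∧ gen i ≤ gen k}, a k.1 ≤ K₁ * M₁ * μ (Q i) := by
  intro i hi hgi
  rcases eq_or_ne K₁ ∞ with rfl | hK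
  · simp [ENNReal.top_mul hM₁.ne', ENNReal.top_mul (hpos i).ne']
  have hK0 : K₁ ≠ 0 := (zero_lt_one.trans_le hK₁).ne'
  have htrunc : ∀ N, ∀ i ∈ carlesonRegion Q gen i₀,
      ∑' k : truncCarlesonRegion Q gen i N, a k ≤ K₁ * M₁ * μ (Q i) := by
    intro N
    induction N with
    | zero => simp [truncCarlesonRegion_zero]
    | succ N ih =>
      intro i hi
      obtain ⟨F, hF, hFdisj, hFmeas, hFsum⟩ := hyp i hi.1 hi.2
      have hFi : ∀ j ∈ F, j ∈ carlesonRegion Q gen i := fun j hj =>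
        ⟨(hF j hj).1, (hF j hj).2.1⟩
      exact tsum_truncCarlesonRegion_succ_le hmeas hpos hsame hK0 hK a hFi hFdisj hFmeas hFsum
        fun j hj => ih j (carlesonRegion_trans (hFi j hj) hi)
  exact ENNReal.tsum_subtype_le_of_subset_iUnion (truncCarlesonRegion_mono i)
    (carlesonRegion_subset_iUnion_truncCarlesonRegion i) fun N => htrunc N i ⟨hi, hgi⟩

/-- the discrete Carleson measure criterion via sawtooth families.
A dyadic system on a measure space `(S,μ)` is modelled by a countable index type
`ι`, cubes `Q : ι → Set S` and generations `gen : ι → ℤ`, with: cubes of equal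
generation equal or disjoint, and a cube of later generation either contained in
or disjoint from a cube of earlier generation. For a cube `i`, the discretized
Carleson region is `𝔻_i = {k | Q k ⊆ Q i ∧ gen i ≤ gen k}`; for a pairwise
disjoint family `F ⊆ 𝔻_{i} ∖ {i}`, `𝔻_{F,i} = 𝔻_i ∖ ⋃_{j ∈ F} 𝔻_j`, and
`𝔪_a(𝔻') = ∑_{k ∈ 𝔻'} a k`.
If for every `i ∈ 𝔻_{i₀}` there is such a family `F` with
`μ(Q i ∖ ⋃_{j∈F} Q j) ≥ K₁⁻¹ μ(Q i)` and `𝔪_a(𝔻_{F,i}) ≤ M₁ μ(Q i)`, then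
`𝔪_a(𝔻_i) ≤ K₁ M₁ μ(Q i)` for every `i ∈ 𝔻_{i₀}`. -/
theorem statement14 {S ι : Type*} [MeasurableSpace S] [Countable ι]
    (μ : Measure S) (Q : ι → Set S) (gen : ι → ℤ)
    (hmeas : ∀ i, MeasurableSet (Q i))
    (hpos : ∀ i, 0 < μ (Q i)) (hfin : ∀ i, μ (Q i) < ∞)
    (hsame : ∀ i j, gen i = gen j → Q i = Q j ∨ Disjoint (Q i) (Q j))
    (hnest : ∀ i j, gen j ≤ gen i → Q i ⊆ Q j ∨ Disjoint (Q i) (Q j))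
    (a : ι → ℝ≥0∞) (i₀ : ι) (M₁ K₁ : ℝ≥0∞) (hM₁ : 0 < M₁) (hK₁ : 1 ≤ K₁)
    (hyp : ∀ i, Q i ⊆ Q i₀ → gen i₀ ≤ gen i →
      ∃ F : Set ι,
        (∀ j ∈ F, Q j ⊆ Q i ∧ gen i ≤ gen j ∧ j ≠ i) ∧
        F.PairwiseDisjoint Q ∧
        K₁⁻¹ * μ (Q i) ≤ μ (Q i \ ⋃ j ∈ F, Q j) ∧
        ∑' k : {k : ι // Q k ⊆ Q i ∧ gen i ≤ gen k ∧
            ∀ j ∈ F, ¬(Q k ⊆ Q j ∧ gen j ≤ gen k)}, a k.1 ≤ M₁ * μ (Q i)) :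
    ∀ i, Q i ⊆ Q i₀ → gen i₀ ≤ gen i →
      ∑' k : {k : ι // Q k ⊆ Q i ∧ gen i ≤ gen k}, a k.1 ≤ K₁ * M₁ * μ (Q i) :=
  statement14_general μ Q gen hmeas hpos hsame a i₀ M₁ K₁ hM₁ hK₁ hyp
end

section
/- Let Q₀ ∈ 𝔻 and let ω be a finite Borel measure on Q₀ with ω ≪ μ on Q₀. Assume there exist K₀ ≥ 1 and θ > 0 such that 1 ≤ ω(Q₀)/μ(Q₀) ≤ K₀ and ω(F)/μ(Q₀) ≤ K₀ ( μ(F)/μ(Q₀) )^θ for every measurable F ⊆ Q₀. Then there exists K₁ ≥ 1, depending only on K₀ and θ, and a pairwise disjoint family 𝓕 = {Q_j} ⊆ 𝔻_{Q₀} ∖ {Q₀} such that μ( Q₀ ∖ ⋃_j Q_j ) ≥ K₁^{-1} μ(Q₀) and 1/2 ≤ ω(Q)/μ(Q) ≤ K₀ K₁ for every Q ∈ 𝔻_{𝓕, Q₀}. -/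
open MeasureTheory Set
open scoped ENNReal

noncomputable section

/-! Stop at the maximal cubes on which the average `ω(Q)/μ(Q)` leaves `[1/2, K₀K₁]`: by
nestedness they are disjoint, and every cube not inside one of them is good. The stopping cubes
with low average carry `ω`-mass at most `μ(Q₀)/2`. Those with high average have total `μ`-mass at
most `(K₀K₁)⁻¹ ω(Q₀) ≤ K₁⁻¹ μ(Q₀)`, so the power bound with `K₁ = (4K₀)^(1/θ)` gives them
`ω`-mass at most `μ(Q₀)/4`. As `ω(Q₀) ≥ μ(Q₀)`, the rest of `Q₀` keeps `ω`-mass at least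
`μ(Q₀)/4`, and the power bound once more turns this into `μ(Q₀ ∖ ⋃ 𝓕) ≥ K₁⁻¹ μ(Q₀)`. -/

section StoppingFamily

variable {S ι : Type*} (Q : ι → Set S) (gen : ι → ℤ)

def IsMaximalCube (B : Set ι) (j : ι) : Prop :=
  j ∈ B ∧ ∀ j' ∈ B, Q j ⊆ Q j' → gen j ≤ gen j'

variable {Q gen} {B : Set ι}

lemma exists_isMaximalCube_superset (hB : BddBelow (gen '' B)) {i : ι} (hi : i ∈ B) :
    ∃ j, IsMaximalCube Q gen B j ∧ Q i ⊆ Q j ∧ gen j ≤ gen i := by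
  obtain ⟨b, hb⟩ := hB
  obtain ⟨g, ⟨j, hjB, rfl, hij⟩, hleast⟩ :=
    Int.exists_least_of_bdd (P := fun g => ∃ j ∈ B, gen j = g ∧ Q i ⊆ Q j)
      ⟨b, fun _ ⟨j, hjB, hjg, _⟩ => hjg ▸ hb (mem_image_of_mem gen hjB)⟩
      ⟨gen i, i, hi, rfl, subset_rfl⟩
  exact ⟨j, ⟨hjB, fun j' hj' hjj' => hleast _ ⟨j', hj', rfl, hij.trans hjj'⟩⟩, hij,
    hleast _ ⟨i, hi, rfl, subset_rfl⟩⟩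

lemma IsMaximalCube.gen_eq {j₁ j₂ : ι} (hj₁ : IsMaximalCube Q gen B j₁)
    (hj₂ : IsMaximalCube Q gen B j₂) (h : Q j₁ = Q j₂) : gen j₁ = gen j₂ :=
  le_antisymm (hj₁.2 j₂ hj₂.1 h.le) (hj₂.2 j₁ hj₁.1 h.ge)

lemma IsMaximalCube.eq_or_disjoint
    (hnest : ∀ i j, gen j ≤ gen i → Q i ⊆ Q j ∨ Disjoint (Q i) (Q j)) {j₁ j₂ : ι}
    (hj₁ : IsMaximalCube Q gen B j₁) (hj₂ : IsMaximalCube Q gen B j₂) :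
    Q j₁ = Q j₂ ∨ Disjoint (Q j₁) (Q j₂) := by
  wlog hle : gen j₂ ≤ gen j₁ generalizing j₁ j₂
  · exact (this hj₂ hj₁ (le_of_not_ge hle)).imp Eq.symm fun h => h.symm
  obtain h₁₂ | hdisj := hnest j₁ j₂ hle
  · have hgen : gen j₁ = gen j₂ := le_antisymm (hj₁.2 j₂ hj₂.1 h₁₂) hle
    obtain h₂₁ | hdisj := hnest j₂ j₁ hgen.le
    · exact Or.inl (h₁₂.antisymm h₂₁)
    · exact Or.inr hdisj.symm
  · exact Or.inr hdisj

theorem exists_pairwiseDisjoint_maximal_cover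
    (hnest : ∀ i j, gen j ≤ gen i → Q i ⊆ Q j ∨ Disjoint (Q i) (Q j))
    (hB : BddBelow (gen '' B)) :
    ∃ 𝓕 ⊆ B, 𝓕.PairwiseDisjoint Q ∧ ∀ i ∈ B, ∃ j ∈ 𝓕, Q i ⊆ Q j ∧ gen j ≤ gen i := by
  -- one index for each maximal cube, as distinct indices may label the same set
  obtain ⟨𝓕, h𝓕M, hbij⟩ := exists_subset_bijOn {j | IsMaximalCube Q gen B j} Q
  refine ⟨𝓕, fun j hj => (h𝓕M hj).1, fun j₁ hj₁ j₂ hj₂ hne => ?_, fun i hi => ?_⟩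
  · exact ((h𝓕M hj₁).eq_or_disjoint hnest (h𝓕M hj₂)).resolve_left
      (fun h => hne (hbij.injOn hj₁ hj₂ h))
  · obtain ⟨m, hm, him, hgen⟩ := exists_isMaximalCube_superset hB hi
    obtain ⟨j, hj, hjm⟩ := hbij.surjOn (mem_image_of_mem Q hm)
    exact ⟨j, hj, hjm ▸ him, ((h𝓕M hj).gen_eq hm hjm).trans_le hgen⟩

end StoppingFamily

section StoppingConstant

def stoppingConstant (K₀ : ℝ≥0∞) (θ : ℝ) : ℝ≥0∞ := (4 * K₀) ^ θ⁻¹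

variable {K₀ : ℝ≥0∞} {θ : ℝ}

lemma one_le_stoppingConstant (hK₀ : 1 ≤ K₀) (hθ : 0 < θ) : 1 ≤ stoppingConstant K₀ θ :=
  ENNReal.one_le_rpow (hK₀.trans (le_mul_of_one_le_left' (by norm_num))) (inv_pos.2 hθ)

lemma stoppingConstant_lt_top (hK₀ : K₀ ≠ ∞) (hθ : 0 < θ) : stoppingConstant K₀ θ < ∞ :=
  ENNReal.rpow_lt_top_of_nonneg (inv_pos.2 hθ).le (ENNReal.mul_ne_top (by norm_num) hK₀)

lemma stoppingConstant_ne_zero (hK₀ : K₀ ≠ 0) (hθ : 0 < θ) : stoppingConstant K₀ θ ≠ 0 :=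
  (ENNReal.rpow_pos_of_nonneg (by positivity) (inv_pos.2 hθ).le).ne'

lemma le_inv_stoppingConstant_iff (hK₀ : K₀ ≠ 0) (hK₀' : K₀ ≠ ∞) (hθ : 0 < θ) {t : ℝ≥0∞} :
    t ≤ (stoppingConstant K₀ θ)⁻¹ ↔ K₀ * t ^ θ ≤ 4⁻¹ := by
  rw [stoppingConstant, ← ENNReal.inv_rpow, ENNReal.le_rpow_inv_iff hθ,
    ENNReal.mul_le_iff_le_inv hK₀ hK₀', ENNReal.mul_inv (by simp) (by simp), mul_comm]

lemma inv_stoppingConstant_le_iff (hK₀ : K₀ ≠ 0) (hK₀' : K₀ ≠ ∞) (hθ : 0 < θ) {t : ℝ≥0∞} :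
    (stoppingConstant K₀ θ)⁻¹ ≤ t ↔ 4⁻¹ ≤ K₀ * t ^ θ := by
  rw [stoppingConstant, ← ENNReal.inv_rpow, ENNReal.rpow_inv_le_iff hθ,
    ← ENNReal.inv_mul_le_iff hK₀ hK₀', ENNReal.mul_inv (by simp) (by simp), mul_comm]

lemma inv_mul_stoppingConstant_mul (hK₀ : K₀ ≠ 0) (hK₀' : K₀ ≠ ∞) :
    (K₀ * stoppingConstant K₀ θ)⁻¹ * K₀ = (stoppingConstant K₀ θ)⁻¹ := by
  rw [ENNReal.mul_inv (Or.inl hK₀) (Or.inl hK₀'), mul_right_comm,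
    ENNReal.inv_mul_cancel hK₀ hK₀', one_mul]

end StoppingConstant

section MeasureEstimates

variable {S ι : Type*} [MeasurableSpace S] {μ ω : Measure S}

lemma measure_biUnion_le_mul_measure_biUnion {Q : ι → Set S} {s : Set ι} (hs : s.Countable)
    (hd : s.PairwiseDisjoint Q) (hm : ∀ j ∈ s, MeasurableSet (Q j)) {c : ℝ≥0∞}
    (h : ∀ j ∈ s, ω (Q j) ≤ c * μ (Q j)) : ω (⋃ j ∈ s, Q j) ≤ c * μ (⋃ j ∈ s, Q j) :=
  calc ω (⋃ j ∈ s, Q j) ≤ ∑' j : s, ω (Q j) := measure_biUnion_le ω hs Q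
    _ ≤ ∑' j : s, c * μ (Q j) := ENNReal.tsum_le_tsum fun j => h j j.2
    _ = c * μ (⋃ j ∈ s, Q j) := by
      rw [ENNReal.tsum_mul_left, measure_biUnion hs hd hm]

variable {A : Set S} {K₀ : ℝ≥0∞} {θ : ℝ}

lemma measure_le_of_le_inv_stoppingConstant_mul (hK₀ : K₀ ≠ 0) (hK₀' : K₀ ≠ ∞) (hθ : 0 < θ)
    (hA : μ A ≠ 0) (hA' : μ A ≠ ∞) {F : Set S}
    (hF : ω F / μ A ≤ K₀ * (μ F / μ A) ^ θ) (hμF : μ F ≤ (stoppingConstant K₀ θ)⁻¹ * μ A) :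
    ω F ≤ 4⁻¹ * μ A := by
  rw [← ENNReal.div_le_iff hA hA'] at hμF ⊢
  exact hF.trans ((le_inv_stoppingConstant_iff hK₀ hK₀' hθ).1 hμF)

lemma inv_stoppingConstant_mul_le_of_le_measure (hK₀ : K₀ ≠ 0) (hK₀' : K₀ ≠ ∞) (hθ : 0 < θ)
    (hA : μ A ≠ 0) (hA' : μ A ≠ ∞) {F : Set S}
    (hF : ω F / μ A ≤ K₀ * (μ F / μ A) ^ θ) (hωF : 4⁻¹ * μ A ≤ ω F) :
    (stoppingConstant K₀ θ)⁻¹ * μ A ≤ μ F := by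
  rw [← ENNReal.le_div_iff_mul_le (Or.inl hA) (Or.inl hA')] at hωF ⊢
  exact (inv_stoppingConstant_le_iff hK₀ hK₀' hθ).2 (hωF.trans hF)

lemma quarter_mul_le_measure_diff (hA' : μ A ≠ ∞) (hμω : μ A ≤ ω A) {U V : Set S}
    (hU : ω U ≤ 2⁻¹ * μ A) (hV : ω V ≤ 4⁻¹ * μ A) : 4⁻¹ * μ A ≤ ω (A \ (U ∪ V)) := by
  have hsum : (4⁻¹ : ℝ≥0∞) + (2⁻¹ + 4⁻¹) = 1 := by
    rw [← ENNReal.toReal_eq_toReal_iff' (by simp) (by simp)]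
    norm_num [ENNReal.toReal_add]
  refine ENNReal.le_of_add_le_add_right (a := (2⁻¹ + 4⁻¹) * μ A)
    (ENNReal.mul_ne_top (by simp) hA') ?_
  calc 4⁻¹ * μ A + (2⁻¹ + 4⁻¹) * μ A = μ A := by rw [← add_mul, hsum, one_mul]
    _ ≤ ω A := hμω
    _ ≤ ω (A \ (U ∪ V)) + ω (U ∪ V) := tsub_le_iff_right.1 le_measure_sdiff
    _ ≤ ω (A \ (U ∪ V)) + (ω U + ω V) := by gcongr; exact measure_union_le _ _
    _ ≤ ω (A \ (U ∪ V)) + (2⁻¹ + 4⁻¹) * μ A := by rw [add_mul]; gcongr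

theorem inv_stoppingConstant_mul_le_measure_diff_biUnion {Q : ι → Set S} {s : Set ι}
    (hs : s.Countable) (hK₀ : K₀ ≠ 0) (hK₀' : K₀ ≠ ∞) (hθ : 0 < θ) (hA : MeasurableSet A)
    (hμA : μ A ≠ 0) (hμA' : μ A ≠ ∞) (hlow : μ A ≤ ω A) (hup : ω A ≤ K₀ * μ A)
    (hpow : ∀ F ⊆ A, MeasurableSet F → ω F / μ A ≤ K₀ * (μ F / μ A) ^ θ)
    (hd : s.PairwiseDisjoint Q) (hm : ∀ j ∈ s, MeasurableSet (Q j)) (hsub : ∀ j ∈ s, Q j ⊆ A)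
    (hbad : ∀ j ∈ s,
      ¬(2⁻¹ ≤ ω (Q j) / μ (Q j) ∧ ω (Q j) / μ (Q j) ≤ K₀ * stoppingConstant K₀ θ)) :
    (stoppingConstant K₀ θ)⁻¹ * μ A ≤ μ (A \ ⋃ j ∈ s, Q j) := by
  set K₁ := stoppingConstant K₀ θ
  set L := {j | ω (Q j) / μ (Q j) < 2⁻¹}
  have hsplit : ⋃ j ∈ s, Q j = (⋃ j ∈ s ∩ L, Q j) ∪ ⋃ j ∈ s \ L, Q j := by
    rw [← biUnion_union, inter_union_sdiff]
  have hsubA : ∀ t ⊆ s, ⋃ j ∈ t, Q j ⊆ A := fun t ht =>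
    iUnion₂_subset fun j hj => hsub j (ht hj)
  have hmeasU : ∀ t ⊆ s, MeasurableSet (⋃ j ∈ t, Q j) := fun t ht =>
    .biUnion (hs.mono ht) fun j hj => hm j (ht hj)
  have hωL : ω (⋃ j ∈ s ∩ L, Q j) ≤ 2⁻¹ * μ A :=
    calc ω (⋃ j ∈ s ∩ L, Q j) ≤ 2⁻¹ * μ (⋃ j ∈ s ∩ L, Q j) :=
          measure_biUnion_le_mul_measure_biUnion (hs.mono inter_subset_left)
            (hd.subset inter_subset_left) (fun j hj => hm j hj.1) fun j hj =>
              (ENNReal.div_le_iff_le_mul (Or.inr (by simp)) (Or.inr (by simp))).1 hj.2.le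
      _ ≤ 2⁻¹ * μ A := by gcongr; exact hsubA _ inter_subset_left
  have hC0 : K₀ * K₁ ≠ 0 := mul_ne_zero hK₀ (stoppingConstant_ne_zero hK₀ hθ)
  have hC : K₀ * K₁ ≠ ∞ := ENNReal.mul_ne_top hK₀' (stoppingConstant_lt_top hK₀' hθ).ne
  have hμH : μ (⋃ j ∈ s \ L, Q j) ≤ K₁⁻¹ * μ A :=
    calc μ (⋃ j ∈ s \ L, Q j) ≤ (K₀ * K₁)⁻¹ * ω (⋃ j ∈ s \ L, Q j) := by
          refine measure_biUnion_le_mul_measure_biUnion (hs.mono sdiff_subset)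
            (hd.subset sdiff_subset) (fun j hj => hm j hj.1) fun j hj => ?_
          have hCj : K₀ * K₁ < ω (Q j) / μ (Q j) :=
            lt_of_not_ge fun h => hbad j hj.1 ⟨le_of_not_gt hj.2, h⟩
          exact (ENNReal.mul_le_iff_le_inv hC0 hC).1 (ENNReal.mul_le_of_le_div hCj.le)
      _ ≤ (K₀ * K₁)⁻¹ * ω A := by gcongr; exact hsubA _ sdiff_subset
      _ ≤ (K₀ * K₁)⁻¹ * (K₀ * μ A) := by gcongr
      _ = K₁⁻¹ * μ A := by rw [← mul_assoc, inv_mul_stoppingConstant_mul hK₀ hK₀']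
  have hωH : ω (⋃ j ∈ s \ L, Q j) ≤ 4⁻¹ * μ A :=
    measure_le_of_le_inv_stoppingConstant_mul hK₀ hK₀' hθ hμA hμA'
      (hpow _ (hsubA _ sdiff_subset) (hmeasU _ sdiff_subset)) hμH
  rw [hsplit]
  exact inv_stoppingConstant_mul_le_of_le_measure hK₀ hK₀' hθ hμA hμA'
    (hpow _ sdiff_subset (hA.diff ((hmeasU _ inter_subset_left).union (hmeasU _ sdiff_subset))))
    (quarter_mul_le_measure_diff hμA' hlow hωL hωH)

end MeasureEstimates

/-- the stopping-time construction. Dyadic systems are modelled as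
in STATEMENT 14: a countable index type `ι`, cubes `Q : ι → Set S` of positive
finite `μ`-measure and generations `gen : ι → ℤ`. Given a finite Borel measure
`ω` on the cube `Q i₀` with `ω ≪ μ` there, satisfying
`1 ≤ ω(Q₀)/μ(Q₀) ≤ K₀` and `ω(F)/μ(Q₀) ≤ K₀ (μ(F)/μ(Q₀))^θ` for all measurable
`F ⊆ Q₀`, there are `K₁ ≥ 1` (depending only on `K₀`, `θ`) and a pairwise
disjoint family `𝓕 ⊆ 𝔻_{Q₀} ∖ {Q₀}` with
`μ(Q₀ ∖ ⋃ 𝓕) ≥ K₁⁻¹ μ(Q₀)` and `1/2 ≤ ω(Q)/μ(Q) ≤ K₀ K₁` for all `Q ∈ 𝔻_{𝓕,Q₀}`. -/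
theorem statement15 (K₀ : ℝ≥0∞) (θ : ℝ) (hK₀ : 1 ≤ K₀) (hK₀' : K₀ < ∞) (hθ : 0 < θ) :
    ∃ K₁ : ℝ≥0∞, 1 ≤ K₁ ∧ K₁ < ∞ ∧
      ∀ (S ι : Type) [MeasurableSpace S] [Countable ι],
        ∀ (μ ω : Measure S) (Q : ι → Set S) (gen : ι → ℤ),
          (∀ i, MeasurableSet (Q i)) →
          (∀ i, 0 < μ (Q i)) → (∀ i, μ (Q i) < ∞) →
          (∀ i j, gen i = gen j → Q i = Q j ∨ Disjoint (Q i) (Q j)) →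
          (∀ i j, gen j ≤ gen i → Q i ⊆ Q j ∨ Disjoint (Q i) (Q j)) →
          ∀ i₀ : ι,
            -- ω is a finite Borel measure on Q i₀, absolutely continuous w.r.t. μ there
            IsFiniteMeasure ω → ω (Q i₀)ᶜ = 0 →
            (∀ F ⊆ Q i₀, μ F = 0 → ω F = 0) →
            -- 1 ≤ ω(Q₀)/μ(Q₀) ≤ K₀
            1 ≤ ω (Q i₀) / μ (Q i₀) → ω (Q i₀) / μ (Q i₀) ≤ K₀ →
            -- ω(F)/μ(Q₀) ≤ K₀ (μ(F)/μ(Q₀))^θ for measurable F ⊆ Q₀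
            (∀ F ⊆ Q i₀, MeasurableSet F →
              ω F / μ (Q i₀) ≤ K₀ * (μ F / μ (Q i₀)) ^ θ) →
            ∃ 𝓕 : Set ι,
              (∀ j ∈ 𝓕, Q j ⊆ Q i₀ ∧ gen i₀ ≤ gen j ∧ j ≠ i₀) ∧
              𝓕.PairwiseDisjoint Q ∧
              K₁⁻¹ * μ (Q i₀) ≤ μ (Q i₀ \ ⋃ j ∈ 𝓕, Q j) ∧
              ∀ i, Q i ⊆ Q i₀ → gen i₀ ≤ gen i →
                (∀ j ∈ 𝓕, ¬(Q i ⊆ Q j ∧ gen j ≤ gen i)) →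
                2⁻¹ ≤ ω (Q i) / μ (Q i) ∧ ω (Q i) / μ (Q i) ≤ K₀ * K₁ := by
  refine ⟨stoppingConstant K₀ θ, one_le_stoppingConstant hK₀ hθ,
    stoppingConstant_lt_top hK₀'.ne hθ, ?_⟩
  intro S ι _ _ μ ω Q gen hmeas hpos hfin _ hnest i₀ _ _ _ hlow hup hpow
  have hK₀0 : K₀ ≠ 0 := (zero_lt_one.trans_le hK₀).ne'
  have hμ0 : μ (Q i₀) ≠ 0 := (hpos i₀).ne'
  have hμtop : μ (Q i₀) ≠ ∞ := (hfin i₀).ne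
  set B := {i | Q i ⊆ Q i₀ ∧ gen i₀ ≤ gen i ∧
    ¬(2⁻¹ ≤ ω (Q i) / μ (Q i) ∧ ω (Q i) / μ (Q i) ≤ K₀ * stoppingConstant K₀ θ)}
  have hi₀ : i₀ ∉ B := fun h => h.2.2 ⟨le_trans (by norm_num) hlow,
    hup.trans (le_mul_of_one_le_right' (one_le_stoppingConstant hK₀ hθ))⟩
  obtain ⟨𝓕, h𝓕B, hdisj, hcover⟩ := exists_pairwiseDisjoint_maximal_cover hnest
    (B := B) ⟨gen i₀, forall_mem_image.2 fun i hi => hi.2.1⟩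
  refine ⟨𝓕, fun j hj => ⟨(h𝓕B hj).1, (h𝓕B hj).2.1, ne_of_mem_of_not_mem (h𝓕B hj) hi₀⟩,
    hdisj, ?_, fun i hi hgi hstop => ?_⟩
  · refine inv_stoppingConstant_mul_le_measure_diff_biUnion 𝓕.to_countable hK₀0 hK₀'.ne hθ
      (hmeas i₀) hμ0 hμtop ?_ ((ENNReal.div_le_iff hμ0 hμtop).1 hup) hpow hdisj (fun j _ => hmeas j)
      (fun j hj => (h𝓕B hj).1) (fun j hj => (h𝓕B hj).2.2)
    simpa using (ENNReal.le_div_iff_mul_le (Or.inl hμ0) (Or.inl hμtop)).1 hlow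
  · by_contra h
    obtain ⟨j, hj, hsub, hg⟩ := hcover i ⟨hi, hgi, h⟩
    exact hstop j hj ⟨hsub, hg⟩
end
end
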